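/- arXiv:1701.05492 — 13 statements merged into one kernel-verified Lean document; each statement's English description precedes it below -/
import Mathlib

section
/- Let D be a finite directed acyclic graph, let P = {C_1, ..., C_p} be a partition of the vertices of D into chains (a chain is a set of vertices that are pairwise comparable in the reachability order of D), and let T = (N_1, ..., N_w) be a sequence of antichains of D with |N_i| = i, where w is the maximum size of an antichain of D. Then for any weight function π : V(D) → ℕ (not necessarily monotone), the sum over chains C in P of max_{v ∈ C} π(v) is at least the sum over i = 1..w of min_{v ∈ N_i} π(v). -/
/-- A chain of a DAG `A`: vertices pairwise joined (in some order) by nontrivial directed paths. -/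
def IsChainD {V : Type*} (A : V → V → Prop) (C : Finset V) : Prop :=
  ∀ u ∈ C, ∀ v ∈ C, u ≠ v → Relation.TransGen A u v ∨ Relation.TransGen A v u

/-- An antichain of a DAG `A`: no nontrivial directed path between two of its vertices. -/
def IsAntichainD {V : Type*} (A : V → V → Prop) (N : Finset V) : Prop :=
  ∀ u ∈ N, ∀ v ∈ N, u ≠ v → ¬ Relation.TransGen A u v

lemma indicator_sum_eq {M n : ℕ} (h : n ≤ M) :
    ∑ t ∈ Finset.Icc 1 M, (if t ≤ n then 1 else 0) = n := by
  classical
  have hfe : (Finset.Icc 1 M).filter (fun t => t ≤ n) = Finset.Icc 1 n := by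
    ext t; simp only [Finset.mem_filter, Finset.mem_Icc]; omega
  rw [← Finset.card_filter, hfe, Nat.card_Icc]
  omega

theorem stmt_0 {V : Type*} [Fintype V] [DecidableEq V] (A : V → V → Prop)
    (hacyc : ∀ v, ¬ Relation.TransGen A v v)
    (π : V → ℕ) (w : ℕ)
    (hw_ex : ∃ N : Finset V, IsAntichainD A N ∧ N.card = w)
    (hw_max : ∀ N : Finset V, IsAntichainD A N → N.card ≤ w)
    (P : Finset (Finset V))
    (hPchain : ∀ C ∈ P, IsChainD A C)
    (hPne : ∀ C ∈ P, C.Nonempty)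
    (hPdisj : (P : Set (Finset V)).PairwiseDisjoint id)
    (hPcover : P.biUnion id = Finset.univ)
    (N : Fin w → Finset V)
    (hNac : ∀ i, IsAntichainD A (N i))
    (hNcard : ∀ i : Fin w, (N i).card = (i : ℕ) + 1) :
    (∑ i : Fin w, sInf (π '' (N i : Set V))) ≤ ∑ C ∈ P, C.sup π := by
  classical
  -- every vertex lies in some chain of P
  have hch : ∀ v : V, ∃ C, C ∈ P ∧ v ∈ C := by
    intro v
    have hv : v ∈ P.biUnion id := hPcover ▸ Finset.mem_univ v
    simpa using Finset.mem_biUnion.mp hv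
  choose ch hchP hchmem using hch
  -- ch is injective on any antichain
  have hch_inj : ∀ (S : Finset V), IsAntichainD A S → Set.InjOn ch S := by
    intro S hS u hu v hv huv
    by_contra hne
    have hc := hPchain _ (hchP u)
    have := hc u (hchmem u) v (huv ▸ hchmem v) hne
    rcases this with h | h
    · exact hS u hu v hv hne h
    · exact hS v hv u hu (Ne.symm hne) h
  set M := Finset.univ.sup π with hM
  have hπM : ∀ v, π v ≤ M := fun v => Finset.le_sup (Finset.mem_univ v)
  have hNne : ∀ i : Fin w, (N i).Nonempty := fun i =>
    Finset.card_pos.mp (by rw [hNcard]; omega)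
  set m : Fin w → ℕ := fun i => sInf (π '' ((N i : Finset V) : Set V)) with hm
  have hm_le : ∀ i : Fin w, ∀ v ∈ N i, m i ≤ π v := by
    intro i v hv
    exact Nat.sInf_le ⟨v, by simpa using hv, rfl⟩
  have hm_iff : ∀ (t : ℕ) (i : Fin w), t ≤ m i ↔ ∀ v ∈ N i, t ≤ π v := by
    intro t i
    constructor
    · intro h v hv; exact h.trans (hm_le i v hv)
    · intro h
      obtain ⟨v, hv⟩ := hNne i
      have hmem : sInf (π '' ((N i : Finset V) : Set V)) ∈ π '' ((N i : Finset V) : Set V) :=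
        Nat.sInf_mem ⟨π v, v, by simpa using hv, rfl⟩
      obtain ⟨u, hu, he⟩ := hmem
      rw [hm]; simp only []
      rw [← he]
      exact h u (by simpa using hu)
  have hmM : ∀ i, m i ≤ M := by
    intro i
    obtain ⟨v, hv⟩ := hNne i
    exact (hm_le i v hv).trans (hπM v)
  -- key counting claim
  have key : ∀ t : ℕ,
      (Finset.univ.filter (fun i : Fin w => t ≤ m i)).card
        ≤ (P.filter (fun C => t ≤ C.sup π)).card := by
    intro t
    set S := Finset.univ.filter (fun i : Fin w => t ≤ m i) with hS
    rcases S.eq_empty_or_nonempty with hSe | hSne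
    · simp [hSe]
    · obtain ⟨j, hjS, hjmax⟩ := S.exists_max_image id hSne
      -- card S ≤ j+1
      have hcardS : S.card ≤ (j : ℕ) + 1 := by
        have hsub : S.image (Fin.val) ⊆ Finset.Iic (j : ℕ) := by
          intro x hx
          obtain ⟨i, hi, rfl⟩ := Finset.mem_image.mp hx
          exact Finset.mem_Iic.mpr (Fin.le_def.mp (hjmax i hi))
        have hcard : (S.image Fin.val).card = S.card :=
          Finset.card_image_of_injective _ Fin.val_injective
        calc S.card = (S.image Fin.val).card := hcard.symm
          _ ≤ (Finset.Iic (j : ℕ)).card := Finset.card_le_card hsub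
          _ = (j : ℕ) + 1 := by rw [Nat.card_Iic]
      have hjt : ∀ v ∈ N j, t ≤ π v := by
        apply (hm_iff t j).mp
        have := Finset.mem_filter.mp hjS
        exact this.2
      have hinj : Set.InjOn ch (N j) := hch_inj _ (hNac j)
      have himg : ∀ v ∈ N j, ch v ∈ P.filter (fun C => t ≤ C.sup π) := by
        intro v hv
        exact Finset.mem_filter.mpr ⟨hchP v, (hjt v hv).trans (Finset.le_sup (hchmem v))⟩
      have hcard2 := Finset.card_le_card_of_injOn ch himg hinj
      rw [hNcard] at hcard2
      omega
  -- rewrite LHS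
  have lhs_eq : ∑ i : Fin w, m i
      = ∑ t ∈ Finset.Icc 1 M, (Finset.univ.filter (fun i : Fin w => t ≤ m i)).card := by
    calc ∑ i : Fin w, m i
        = ∑ i : Fin w, ∑ t ∈ Finset.Icc 1 M, (if t ≤ m i then 1 else 0) :=
          Finset.sum_congr rfl fun i _ => (indicator_sum_eq (hmM i)).symm
      _ = ∑ t ∈ Finset.Icc 1 M, ∑ i : Fin w, (if t ≤ m i then 1 else 0) := Finset.sum_comm
      _ = _ := Finset.sum_congr rfl fun t _ => (Finset.card_filter _ _).symm
  have hsupM : ∀ C ∈ P, C.sup π ≤ M :=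
    fun C _ => Finset.sup_mono (Finset.subset_univ C)
  have rhs_eq : ∑ C ∈ P, C.sup π
      = ∑ t ∈ Finset.Icc 1 M, (P.filter (fun C => t ≤ C.sup π)).card := by
    calc ∑ C ∈ P, C.sup π
        = ∑ C ∈ P, ∑ t ∈ Finset.Icc 1 M, (if t ≤ C.sup π then 1 else 0) :=
          Finset.sum_congr rfl fun C hC => (indicator_sum_eq (hsupM C hC)).symm
      _ = ∑ t ∈ Finset.Icc 1 M, ∑ C ∈ P, (if t ≤ C.sup π then 1 else 0) := Finset.sum_comm
      _ = _ := Finset.sum_congr rfl fun t _ => (Finset.card_filter _ _).symm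
  show ∑ i : Fin w, m i ≤ ∑ C ∈ P, C.sup π
  rw [lhs_eq, rhs_eq]
  exact Finset.sum_le_sum fun t _ => key t
end

section
/- Let D be a finite directed acyclic graph with vertex set V and let π : V → ℕ be a monotone weight function, i.e., π(u) ≤ π(v) whenever there is an arc (u,v) in D. Let w be the width of D (the maximum size of an antichain). Then there exist a chain partition P = {C_1, ..., C_w} of D into exactly w chains and a tower of antichains T = (N_1, ..., N_w) with |N_i| = i such that the price of P equals the value of T, i.e., Σ_{j=1}^{w} max_{v ∈ C_j} π(v) = Σ_{i=1}^{w} min_{v ∈ N_i} π(v). -/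
/-!
Write `U k` for the vertices of weight at least `k` (an up-closed set, as `π` is monotone) and
`w k` for its width. Call `S` independent when it satisfies Hall's condition for the bipartite
graph `v ↦ {u | v < u}`; these sets form a transversal matroid. An injective matching of `S`,
followed from each vertex until it leaves `S`, partitions the DAG into `#Sᶜ` chains, each topped
by its unique vertex outside `S`; hence an independent `S ⊆ U` has `#S + width U ≤ #U`, and König's
theorem gives equality for some `S`. Augmenting greedily from the top level down yields one `S`
that is maximum in every `U k`, so its chains cost `∑_{t ∉ S} π t = ∑_{k ≥ 1} w k`. Dually, let
`m i` be the largest `k` with `i < w k`: an `(i + 1)`-antichain in `U (m i)` has minimum weight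
exactly `m i`, and `∑_{i < w} m i = ∑_{k ≥ 1} w k` since the two sequences are conjugate.
-/

open Finset Relation

theorem Finset.sum_eq_sum_range_card_filter_lt {ι : Type*} (s : Finset ι) (f : ι → ℕ) {n : ℕ}
    (hf : ∀ x ∈ s, f x ≤ n) : ∑ x ∈ s, f x = ∑ k ∈ range n, #{x ∈ s | k < f x} := by
  simp_rw [card_filter]
  rw [sum_comm]
  refine sum_congr rfl fun x hx => ?_
  have hfilter : {k ∈ range n | k < f x} = range (f x) := by
    ext k
    simp only [mem_filter, mem_range]
    have := hf x hx
    omega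
  rw [← card_filter, hfilter, card_range]

section Hall

variable {α β : Type*} [DecidableEq β]

def HallIndep (nb : α → Finset β) (S : Finset α) : Prop :=
  ∀ T ⊆ S, #T ≤ #(T.biUnion nb)

variable {nb : α → Finset β} {S : Finset α}

theorem hallIndep_empty : HallIndep nb ∅ := by
  intro T hT
  simp [subset_empty.1 hT]

namespace HallIndep

theorem mono {S' : Finset α} (h : S ⊆ S') (hS' : HallIndep nb S') : HallIndep nb S :=
  fun T hT => hS' T (hT.trans h)

theorem exists_injective (hS : HallIndep nb S) :
    ∃ g : S → β, Function.Injective g ∧ ∀ a : S, g a ∈ nb a := by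
  refine (all_card_le_biUnion_card_iff_exists_injective _).1 fun s => ?_
  have hs : (s.map (Function.Embedding.subtype _)).biUnion nb = s.biUnion (nb ·) := by
    ext; simp
  simpa [hs] using hS (s.map (Function.Embedding.subtype _)) (map_subtype_subset s)

variable [DecidableEq α]

/-- Deficiencies of the critical sets add up, by submodularity of `T ↦ #(T.biUnion nb)`. -/
theorem exists_card_biUnion_add_card_le (hS : HallIndep nb S) {X : Finset α}
    (hXS : Disjoint X S) (hX : ∀ x ∈ X, ¬ HallIndep nb (insert x S)) :
    ∃ U ⊆ X ∪ S, #(U.biUnion nb) + #X ≤ #U := by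
  induction X using Finset.induction_on with
  | empty => exact ⟨∅, empty_subset _, by simp⟩
  | insert y X hy ih =>
    obtain ⟨U, hUXS, hU⟩ := ih (disjoint_of_subset_left (subset_insert _ _) hXS)
      fun x hx => hX x (mem_insert_of_mem hx)
    obtain ⟨T, hTS, hT⟩ : ∃ T ⊆ insert y S, #(T.biUnion nb) < #T := by
      simpa [HallIndep] using hX y (mem_insert_self _ _)
    have hyS : y ∉ S := disjoint_left.1 hXS (mem_insert_self _ _)
    have hUT : U ∩ T ⊆ S := by
      intro z hz
      rcases mem_insert.1 (hTS (mem_inter.1 hz).2) with rfl | hzS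
      · rcases mem_union.1 (hUXS (mem_inter.1 hz).1) with h | h
        · exact absurd h hy
        · exact absurd h hyS
      · exact hzS
    refine ⟨U ∪ T, union_subset (hUXS.trans ?_) (hTS.trans ?_), ?_⟩
    · exact union_subset_union (subset_insert _ _) subset_rfl
    · rw [insert_union]
      exact insert_subset_insert _ subset_union_right
    · have h1 := card_union_add_card_inter U T
      have h2 := card_union_add_card_inter (U.biUnion nb) (T.biUnion nb)
      have h3 : #((U ∩ T).biUnion nb) ≤ #(U.biUnion nb ∩ T.biUnion nb) :=
        card_le_card (subset_inter (biUnion_subset_biUnion_of_subset_left _ inter_subset_left)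
          (biUnion_subset_biUnion_of_subset_left _ inter_subset_right))
      have h4 := hS _ hUT
      rw [union_biUnion, card_insert_of_notMem hy]
      omega

theorem exists_insert_of_card_lt {I J : Finset α} (hI : HallIndep nb I) (hJ : HallIndep nb J)
    (h : #I < #J) :
    ∃ x ∈ J, x ∉ I ∧ HallIndep nb (insert x I) := by
  by_contra! hcon
  obtain ⟨U, hU, hUdef⟩ := hI.exists_card_biUnion_add_card_le sdiff_disjoint
    fun x hx => hcon x (mem_sdiff.1 hx).1 (mem_sdiff.1 hx).2
  have h1 : #(U ∩ J) ≤ #(U.biUnion nb) := (hJ _ inter_subset_right).trans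
    (card_le_card (biUnion_subset_biUnion_of_subset_left _ inter_subset_left))
  have h2 : U \ J ⊆ I \ J := by
    intro z hz
    rw [mem_sdiff] at hz ⊢
    rcases mem_union.1 (hU hz.1) with h | h
    · exact absurd (mem_sdiff.1 h).1 hz.2
    · exact ⟨h, hz.2⟩
  have h3 := card_inter_add_card_sdiff U J
  have h4 := card_inter_add_card_sdiff J I
  have h5 := card_inter_add_card_sdiff I J
  have h6 := card_le_card h2
  rw [inter_comm] at h5
  -- `#(J \ I) ≤ #U - #(U.biUnion nb) ≤ #(U \ J) ≤ #(I \ J)`, so `#J ≤ #I`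
  omega

theorem exists_augment {S J : Finset α} (hS : HallIndep nb S) (hJ : HallIndep nb J) :
    ∃ S', HallIndep nb S' ∧ S ⊆ S' ∧ S' ⊆ S ∪ J ∧ #J ≤ #S' := by
  by_cases h : #J ≤ #S
  · exact ⟨S, hS, subset_rfl, subset_union_left, h⟩
  obtain ⟨x, hxJ, hxS, hx⟩ := hS.exists_insert_of_card_lt hJ (not_le.1 h)
  obtain ⟨S', hS', h1, h2, h3⟩ := exists_augment hx hJ
  refine ⟨S', hS', (subset_insert _ _).trans h1, h2.trans ?_, h3⟩
  rw [insert_union]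
  exact insert_subset (mem_union_right _ hxJ) subset_rfl
termination_by #J - #S
decreasing_by rw [card_insert_of_notMem hxS]; omega

end HallIndep

/-- König's theorem, in deficiency form. -/
theorem exists_hallIndep_card_add_le [DecidableEq α] (nb : α → Finset β) (W : Finset α) :
    ∃ S ⊆ W, HallIndep nb S ∧ ∃ U ⊆ W, #W + #(U.biUnion nb) ≤ #S + #U := by
  classical
  obtain ⟨S, hSmem, hSmax⟩ := exists_max_image (W.powerset.filter (HallIndep nb)) card
    ⟨∅, by simp [hallIndep_empty]⟩
  rw [mem_filter, mem_powerset] at hSmem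
  obtain ⟨hSW, hS⟩ := hSmem
  obtain ⟨U, hU, hUdef⟩ := hS.exists_card_biUnion_add_card_le sdiff_disjoint fun x hx hind => by
    have := hSmax (insert x S) (by simp [insert_subset (mem_sdiff.1 hx).1 hSW, hind])
    rw [card_insert_of_notMem (mem_sdiff.1 hx).2] at this
    omega
  refine ⟨S, hSW, hS, U, hU.trans (sdiff_union_of_subset hSW).le, ?_⟩
  have := card_sdiff_add_card_eq_card hSW
  omega

end Hall

section Dag

variable {V : Type*} {A : V → V → Prop}

theorem le_of_reflTransGen {β : Type*} [Preorder β] {π : V → β}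
    (hmono : ∀ u v, A u v → π u ≤ π v) {u v : V} (h : ReflTransGen A u v) : π u ≤ π v := by
  induction h with
  | refl => exact le_rfl
  | tail _ hbc ih => exact ih.trans (hmono _ _ hbc)

theorem IsAntichainD.subset {B B' : Finset V} (hB : IsAntichainD A B) (h : B' ⊆ B) :
    IsAntichainD A B' :=
  fun u hu v hv => hB u (h hu) v (h hv)

open scoped Classical in
noncomputable def succSet [Fintype V] (A : V → V → Prop) (v : V) : Finset V :=
  {u | TransGen A v u}

theorem mem_succSet [Fintype V] {u v : V} : u ∈ succSet A v ↔ TransGen A v u := by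
  simp [succSet]

theorem isAntichainD_sdiff_biUnion_succSet [Fintype V] [DecidableEq V] (U : Finset V) :
    IsAntichainD A (U \ U.biUnion (succSet A)) := fun u hu _ hv _ huv =>
  (mem_sdiff.1 hv).2 (mem_biUnion.2 ⟨u, (mem_sdiff.1 hu).1, mem_succSet.2 huv⟩)

structure IsChainRetraction (A : V → V → Prop) (T : Finset V) (r : V → V) : Prop where
  mem : ∀ v, r v ∈ T
  reaches : ∀ v, ReflTransGen A v (r v)
  fixed : ∀ t ∈ T, r t = t
  comparable : ∀ u v, r u = r v → ReflTransGen A u v ∨ ReflTransGen A v u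

section Matching

variable {S : Finset V} (g : S → V)

def MatchStep (a b : V) : Prop := ∃ h : a ∈ S, g ⟨a, h⟩ = b

variable {g}

theorem reflTransGen_of_matchStep (hg : ∀ a : S, TransGen A a (g a)) {a b : V}
    (h : ReflTransGen (MatchStep g) a b) : ReflTransGen A a b := by
  induction h with
  | refl => exact .refl
  | tail _ hbc ih =>
    obtain ⟨hb, rfl⟩ := hbc
    exact ih.trans (hg ⟨_, hb⟩).to_reflTransGen

theorem exists_matchStep_notMem [Finite V] (hacyc : ∀ v, ¬ TransGen A v v)
    (hg : ∀ a : S, TransGen A a (g a)) (v : V) : ∃ t ∉ S, ReflTransGen (MatchStep g) v t := by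
  have : IsTrans V (flip (TransGen A)) := ⟨fun _ _ _ hab hbc => hbc.trans hab⟩
  have : Std.Irrefl (flip (TransGen A)) := ⟨hacyc⟩
  induction v using (Finite.wellFounded_of_trans_of_irrefl (flip (TransGen A))).induction with
  | _ v ih =>
  by_cases hv : v ∈ S
  · obtain ⟨t, ht, hvt⟩ := ih _ (hg ⟨v, hv⟩)
    exact ⟨t, ht, .head ⟨hv, rfl⟩ hvt⟩
  · exact ⟨v, hv, .refl⟩

/-- Injectivity of `g` makes any two `MatchStep g`-paths into a common endpoint nested. -/
theorem exists_isChainRetraction_of_injective [Fintype V] [DecidableEq V]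
    (hacyc : ∀ v, ¬ TransGen A v v) (hg_inj : Function.Injective g)
    (hg : ∀ a : S, TransGen A a (g a)) : ∃ r, IsChainRetraction A Sᶜ r := by
  choose r hrS hr using exists_matchStep_notMem hacyc hg
  have hleft : Relator.RightUnique (Function.swap (MatchStep g)) :=
    fun _ _ _ ⟨_, h⟩ ⟨_, h'⟩ => congrArg Subtype.val (hg_inj (h.trans h'.symm))
  refine ⟨r, fun v => mem_compl.2 (hrS v), fun v => reflTransGen_of_matchStep hg (hr v),
    fun t ht => ?_, fun u v huv => ?_⟩
  · rcases (hr t).cases_head with h | ⟨c, ⟨htS, _⟩, _⟩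
    · exact h.symm
    · exact absurd htS (mem_compl.1 ht)
  · have hu := reflTransGen_swap.2 (hr u)
    have hv := reflTransGen_swap.2 (hr v)
    rw [huv] at hu
    rcases ReflTransGen.total_of_right_unique hleft hv hu with h | h
    · exact .inl (reflTransGen_of_matchStep hg (reflTransGen_swap.1 h))
    · exact .inr (reflTransGen_of_matchStep hg (reflTransGen_swap.1 h))

end Matching

theorem HallIndep.exists_isChainRetraction [Fintype V] [DecidableEq V]
    (hacyc : ∀ v, ¬ TransGen A v v) {S : Finset V} (hS : HallIndep (succSet A) S) :
    ∃ r, IsChainRetraction A Sᶜ r := by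
  obtain ⟨g, hg_inj, hg⟩ := hS.exists_injective
  exact exists_isChainRetraction_of_injective hacyc hg_inj fun a => mem_succSet.1 (hg a)

def IsChainPartition [Fintype V] [DecidableEq V] (A : V → V → Prop)
    (P : Finset (Finset V)) : Prop :=
  (∀ C ∈ P, IsChainD A C) ∧ (∀ C ∈ P, C.Nonempty) ∧ (P : Set (Finset V)).PairwiseDisjoint id ∧
    P.biUnion id = univ

namespace IsChainRetraction

variable {T : Finset V} {r : V → V}

theorem card_le_card_inter [DecidableEq V] (hr : IsChainRetraction A T r) {W B : Finset V}
    (hW : ∀ u v, ReflTransGen A u v → u ∈ W → v ∈ W) (hBW : B ⊆ W) (hB : IsAntichainD A B) :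
    #B ≤ #(W ∩ T) := by
  refine card_le_card_of_injOn r (fun b hb => mem_inter.2 ⟨hW _ _ (hr.reaches b) (hBW hb),
    hr.mem b⟩) fun b hb b' hb' h => ?_
  by_contra hne
  rcases hr.comparable b b' h with h | h <;> rcases reflTransGen_iff_eq_or_transGen.1 h with h | h
  · exact hne h.symm
  · exact hB b hb b' hb' hne h
  · exact hne h
  · exact hB b' hb' b hb (Ne.symm hne) h

theorem exists_isChainPartition [Fintype V] [DecidableEq V] (hr : IsChainRetraction A T r)
    (π : V → ℕ) (hmono : ∀ u v, A u v → π u ≤ π v) :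
    ∃ P, IsChainPartition A P ∧ #P = #T ∧ ∑ C ∈ P, C.sup π = ∑ t ∈ T, π t := by
  set fiber : V → Finset V := fun t => {v | r v = t}
  have mem_fiber {v t : V} : v ∈ fiber t ↔ r v = t := by simp [fiber]
  have self_mem_fiber {t : V} (ht : t ∈ T) : t ∈ fiber t := mem_fiber.2 (hr.fixed t ht)
  have hinj : Set.InjOn fiber T := fun t ht t' _ h => by
    have : r t = t' := mem_fiber.1 (h ▸ self_mem_fiber ht)
    rwa [hr.fixed t ht] at this
  refine ⟨T.image fiber, ⟨?_, ?_, ?_, ?_⟩, card_image_of_injOn hinj, ?_⟩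
  · simp only [mem_image]
    rintro _ ⟨t, -, rfl⟩ u hu v hv huv
    rcases hr.comparable u v (by rw [mem_fiber.1 hu, mem_fiber.1 hv]) with h | h <;>
      rcases reflTransGen_iff_eq_or_transGen.1 h with h | h
    exacts [absurd h.symm huv, .inl h, absurd h huv, .inr h]
  · simp only [mem_image]
    rintro _ ⟨t, ht, rfl⟩
    exact ⟨t, self_mem_fiber ht⟩
  · simp only [coe_image]
    rintro _ ⟨t, -, rfl⟩ _ ⟨t', -, rfl⟩ hne
    refine disjoint_left.2 fun v hv hv' => hne ?_
    rw [← mem_fiber.1 hv, mem_fiber.1 hv']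
  · refine eq_univ_of_forall fun v => mem_biUnion.2 ⟨fiber (r v), ?_, mem_fiber.2 rfl⟩
    exact mem_image_of_mem _ (hr.mem v)
  · rw [sum_image hinj]
    refine sum_congr rfl fun t ht =>
      le_antisymm (Finset.sup_le fun v hv => ?_) (le_sup (self_mem_fiber ht))
    rw [← mem_fiber.1 hv]
    exact le_of_reflTransGen hmono (hr.reaches v)

end IsChainRetraction

end Dag

section Width

variable {V : Type*} {A : V → V → Prop}

open scoped Classical in
noncomputable def width (A : V → V → Prop) (W : Finset V) : ℕ :=
  {B ∈ W.powerset | IsAntichainD A B}.sup card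

theorem exists_isAntichainD_card_eq_width (W : Finset V) :
    ∃ B ⊆ W, IsAntichainD A B ∧ #B = width A W := by
  classical
  obtain ⟨B, hB, hBw⟩ := exists_mem_eq_sup {B ∈ W.powerset | IsAntichainD A B}
    ⟨∅, mem_filter.2 ⟨empty_mem_powerset W, by simp [IsAntichainD]⟩⟩ card
  rw [mem_filter, mem_powerset] at hB
  exact ⟨B, hB.1, hB.2, by rw [width, hBw]⟩

theorem card_le_width {W B : Finset V} (hBW : B ⊆ W) (hB : IsAntichainD A B) :
    #B ≤ width A W := by
  classical
  exact le_sup (f := card) (mem_filter.2 ⟨mem_powerset.2 hBW, hB⟩)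

theorem width_mono {W W' : Finset V} (h : W ⊆ W') : width A W ≤ width A W' := by
  obtain ⟨B, hBW, hB, hBw⟩ := exists_isAntichainD_card_eq_width (A := A) W
  exact hBw ▸ card_le_width (hBW.trans h) hB

theorem width_empty : width A (∅ : Finset V) = 0 := by
  obtain ⟨B, hB, -, hBw⟩ := exists_isAntichainD_card_eq_width (A := A) (∅ : Finset V)
  rw [← hBw, subset_empty.1 hB, card_empty]

variable [Fintype V]

theorem width_univ_eq {w : ℕ} (hw_ex : ∃ N : Finset V, IsAntichainD A N ∧ #N = w)
    (hw_max : ∀ N : Finset V, IsAntichainD A N → #N ≤ w) : width A univ = w := by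
  obtain ⟨N, hN, rfl⟩ := hw_ex
  obtain ⟨B, -, hB, hBw⟩ := exists_isAntichainD_card_eq_width (A := A) univ
  exact le_antisymm (hBw ▸ hw_max B hB) (card_le_width (subset_univ N) hN)

variable [DecidableEq V]

theorem HallIndep.card_add_width_le (hacyc : ∀ v, ¬ TransGen A v v) {S W : Finset V}
    (hW : ∀ u v, ReflTransGen A u v → u ∈ W → v ∈ W) (hSW : S ⊆ W)
    (hS : HallIndep (succSet A) S) : #S + width A W ≤ #W := by
  obtain ⟨B, hBW, hB, hBw⟩ := exists_isAntichainD_card_eq_width (A := A) W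
  obtain ⟨r, hr⟩ := hS.exists_isChainRetraction hacyc
  have hBS := hr.card_le_card_inter hW hBW hB
  rw [← sdiff_eq_inter_compl] at hBS
  have := card_sdiff_add_card_eq_card hSW
  omega

theorem exists_hallIndep_card_add_width_eq (hacyc : ∀ v, ¬ TransGen A v v) {W : Finset V}
    (hW : ∀ u v, ReflTransGen A u v → u ∈ W → v ∈ W) :
    ∃ S ⊆ W, HallIndep (succSet A) S ∧ #S + width A W = #W := by
  obtain ⟨S, hSW, hS, U, hUW, hU⟩ := exists_hallIndep_card_add_le (succSet A) W
  have h1 :=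
    card_le_width (sdiff_subset.trans hUW) (isAntichainD_sdiff_biUnion_succSet (A := A) U)
  have h2 := hS.card_add_width_le hacyc hW hSW
  have h3 := card_le_card_sdiff_add_card (s := U) (t := U.biUnion (succSet A))
  exact ⟨S, hSW, hS, by omega⟩

/-- Greedy construction from `W n = ∅` downwards: an independent set that is maximum in every
`W k` with `k > m` is augmented, by the matroid exchange property, to a maximum one of `W m`;
as it only grows, it stays maximum in the smaller sets. -/
theorem exists_hallIndep_card_inter_add_width_eq (hacyc : ∀ v, ¬ TransGen A v v)
    {W : ℕ → Finset V} (hW_anti : Antitone W)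
    (hW : ∀ k u v, ReflTransGen A u v → u ∈ W k → v ∈ W k) {n : ℕ} (hn : W n = ∅) :
    ∃ S, HallIndep (succSet A) S ∧ ∀ k, #(S ∩ W k) + width A (W k) = #(W k) := by
  suffices ∀ m ≤ n, ∃ S ⊆ W m, HallIndep (succSet A) S ∧
      ∀ k ≥ m, #(S ∩ W k) + width A (W k) = #(W k) by
    obtain ⟨S, -, hS, hSk⟩ := this 0 n.zero_le
    exact ⟨S, hS, fun k => hSk k k.zero_le⟩
  intro m hm
  induction hm using Nat.decreasingInduction with
  | self =>
    refine ⟨∅, by simp, hallIndep_empty, fun k hk => ?_⟩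
    have hWk : W k = ∅ := subset_empty.1 (hn ▸ hW_anti hk)
    rw [hWk, width_empty]
    rfl
  | of_succ m _ ih =>
    obtain ⟨S, hSW, hS, hSk⟩ := ih
    obtain ⟨J, hJW, hJ, hJcard⟩ := exists_hallIndep_card_add_width_eq hacyc (hW m)
    obtain ⟨S', hS', hSS', hS'SJ, hJS'⟩ := hS.exists_augment hJ
    have hS'W : S' ⊆ W m := hS'SJ.trans (union_subset (hSW.trans (hW_anti m.le_succ)) hJW)
    refine ⟨S', hS'W, hS', fun k hk => ?_⟩
    have hbound := (hS'.mono inter_subset_left).card_add_width_le hacyc (hW k) inter_subset_right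
    rcases hk.eq_or_lt with rfl | hk
    · rw [inter_eq_left.2 hS'W] at hbound ⊢
      omega
    · have := hSk k hk
      have := card_le_card (inter_subset_inter_right hSS' : S ∩ W k ⊆ S' ∩ W k)
      omega

end Width

section Levels

variable {V : Type*} [Fintype V] {A : V → V → Prop}

def upperLevel (π : V → ℕ) (k : ℕ) : Finset V := {v | k ≤ π v}

variable {π : V → ℕ}

theorem mem_upperLevel {k : ℕ} {v : V} : v ∈ upperLevel π k ↔ k ≤ π v := by
  simp [upperLevel]

theorem upperLevel_antitone (π : V → ℕ) : Antitone (upperLevel π) :=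
  fun _ _ h _ hv => mem_upperLevel.2 (h.trans (mem_upperLevel.1 hv))

theorem upperLevel_zero (π : V → ℕ) : upperLevel π 0 = univ :=
  eq_univ_of_forall fun _ => mem_upperLevel.2 (Nat.zero_le _)

theorem upperLevel_eq_empty {K k : ℕ} (hK : ∀ v, π v ≤ K) (hk : K < k) : upperLevel π k = ∅ :=
  eq_empty_of_forall_notMem fun v hv => (hk.trans_le (mem_upperLevel.1 hv)).not_ge (hK v)

theorem mem_upperLevel_of_reflTransGen (hmono : ∀ u v, A u v → π u ≤ π v) (k : ℕ) {u v : V}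
    (h : ReflTransGen A u v) (hu : u ∈ upperLevel π k) : v ∈ upperLevel π k :=
  mem_upperLevel.2 ((mem_upperLevel.1 hu).trans (le_of_reflTransGen hmono h))

theorem sum_compl_eq_sum_width [DecidableEq V] {S : Finset V}
    (hS : ∀ k, #(S ∩ upperLevel π k) + width A (upperLevel π k) = #(upperLevel π k))
    {K : ℕ} (hK : ∀ v, π v ≤ K) :
    ∑ t ∈ Sᶜ, π t = ∑ k ∈ range K, width A (upperLevel π (k + 1)) := by
  rw [sum_eq_sum_range_card_filter_lt _ _ fun t _ => hK t]
  refine sum_congr rfl fun k _ => ?_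
  have hfilter : {t ∈ Sᶜ | k < π t} = upperLevel π (k + 1) \ S := by
    ext
    simp only [mem_filter, mem_compl, mem_sdiff, mem_upperLevel, Nat.lt_iff_add_one_le]
    exact and_comm
  have := hS (k + 1)
  rw [hfilter, card_sdiff]
  omega

theorem exists_isAntichainD_card_eq_sInf_eq {i k : ℕ} (hk : i < width A (upperLevel π k))
    (hk1 : width A (upperLevel π (k + 1)) ≤ i) :
    ∃ N, IsAntichainD A N ∧ #N = i + 1 ∧ sInf (π '' (N : Set V)) = k := by
  obtain ⟨B, hBk, hB, hBw⟩ := exists_isAntichainD_card_eq_width (A := A) (upperLevel π k)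
  obtain ⟨N, hNB, hN⟩ := exists_subset_card_eq (show i + 1 ≤ #B by omega)
  have hNa := hB.subset hNB
  obtain ⟨v, hv⟩ : N.Nonempty := card_pos.1 (by omega)
  refine ⟨N, hNa, hN, le_antisymm ?_ (le_csInf ⟨π v, v, hv, rfl⟩ ?_)⟩
  · by_contra! hlt
    have := card_le_width (W := upperLevel π (k + 1))
      (fun u hu => mem_upperLevel.2 (hlt.trans_le (Nat.sInf_le ⟨u, hu, rfl⟩))) hNa
    omega
  · rintro _ ⟨u, hu, rfl⟩
    exact mem_upperLevel.1 (hBk (hNB hu))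

end Levels

theorem apply_findGreatest_succ_le {g : ℕ → ℕ} {i n : ℕ} (hn : g (n + 1) ≤ i) :
    g (Nat.findGreatest (i < g ·) n + 1) ≤ i := by
  refine not_lt.1 fun h => ?_
  rcases (Nat.findGreatest_le (P := (i < g ·)) n).lt_or_eq with hlt | heq
  · exact Nat.findGreatest_is_greatest (P := (i < g ·)) (Nat.lt_succ_self _) hlt h
  · rw [heq] at h
    omega

theorem sum_range_findGreatest_lt_eq {g : ℕ → ℕ} (hg : Antitone g) (n : ℕ) :
    ∑ i ∈ range (g 0), Nat.findGreatest (i < g ·) n = ∑ k ∈ range n, g (k + 1) := by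
  rw [sum_eq_sum_range_card_filter_lt _ _ fun i _ => Nat.findGreatest_le n]
  refine sum_congr rfl fun k hk => ?_
  have hfilter : {i ∈ range (g 0) | k < Nat.findGreatest (i < g ·) n} = range (g (k + 1)) := by
    ext i
    simp only [mem_filter, mem_range]
    constructor
    · rintro ⟨hi, hk'⟩
      exact (Nat.findGreatest_spec (P := (i < g ·)) n.zero_le hi).trans_le (hg hk')
    · intro hi
      exact ⟨hi.trans_le (hg k.succ.zero_le), Nat.le_findGreatest (mem_range.1 hk) hi⟩
  rw [hfilter, card_range]

/-- Min-max strengthening of Dilworth's theorem: for a monotone weight function on a finite DAG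
of width `w`, there are a chain partition into `w` chains and a tower of antichains with equal
price and value. -/
theorem stmt_1 {V : Type*} [Fintype V] [DecidableEq V] (A : V → V → Prop)
    (hacyc : ∀ v, ¬ Relation.TransGen A v v)
    (π : V → ℕ)
    (hmono : ∀ u v, A u v → π u ≤ π v)
    (w : ℕ)
    (hw_ex : ∃ N : Finset V, IsAntichainD A N ∧ N.card = w)
    (hw_max : ∀ N : Finset V, IsAntichainD A N → N.card ≤ w) :
    ∃ (P : Finset (Finset V)) (N : Fin w → Finset V),
      P.card = w ∧
      (∀ C ∈ P, IsChainD A C) ∧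
      (∀ C ∈ P, C.Nonempty) ∧
      (P : Set (Finset V)).PairwiseDisjoint id ∧
      P.biUnion id = Finset.univ ∧
      (∀ i, IsAntichainD A (N i)) ∧
      (∀ i : Fin w, (N i).card = (i : ℕ) + 1) ∧
      (∑ C ∈ P, C.sup π) = ∑ i : Fin w, sInf (π '' (N i : Set V)) := by
  obtain ⟨K, hK⟩ : ∃ K, ∀ v, π v ≤ K := ⟨univ.sup π, fun v => le_sup (mem_univ v)⟩
  have hK1 : upperLevel π (K + 1) = ∅ := upperLevel_eq_empty hK K.lt_succ_self
  have hw : width A (upperLevel π 0) = w := upperLevel_zero π ▸ width_univ_eq hw_ex hw_max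
  obtain ⟨S, hS, hSlevel⟩ := exists_hallIndep_card_inter_add_width_eq hacyc
    (upperLevel_antitone π) (mem_upperLevel_of_reflTransGen hmono) hK1
  obtain ⟨r, hr⟩ := hS.exists_isChainRetraction hacyc
  obtain ⟨P, ⟨hchain, hne, hdisj, hcover⟩, hPcard, hprice⟩ := hr.exists_isChainPartition π hmono
  have hPw : #P = w := by
    have := hSlevel 0
    rw [hw, upperLevel_zero, inter_univ, card_univ] at this
    rw [hPcard, card_compl]
    omega
  have tower (i : Fin w) := exists_isAntichainD_card_eq_sInf_eq (A := A) (π := π)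
    (Nat.findGreatest_spec (P := fun k => i < width A (upperLevel π k)) K.zero_le (hw ▸ i.isLt))
    (apply_findGreatest_succ_le (g := fun k => width A (upperLevel π k))
      (by rw [hK1, width_empty]; exact Nat.zero_le _))
  choose N hN using tower
  refine ⟨P, N, hPw, hchain, hne, hdisj, hcover, fun i => (hN i).1, fun i => (hN i).2.1, ?_⟩
  rw [hprice, sum_compl_eq_sum_width hSlevel hK,
    ← sum_range_findGreatest_lt_eq (fun _ _ h => width_mono (upperLevel_antitone π h)), hw,
    ← Fin.sum_univ_eq_sum_range]
  exact sum_congr rfl fun i _ => (hN i).2.2.symm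
end

section
/- Every conflict-free binary matrix M with m rows, no all-zero row, and no all-zero column has at most 2m pairwise distinct columns. -/
/-- The support of column `j` of binary matrix `M`: the set of rows with a `1` in column `j`. -/
def Supp {α β : Type*} [Fintype α] [DecidableEq α] (M : α → β → Bool) (j : β) : Finset α :=
  Finset.univ.filter (fun r => M r j = true)

/-- `M` is conflict-free: no two columns contain three rows forming the pattern
`[[1,1],[1,0],[0,1]]`. -/
def ConflictFree {α β : Type*} (M : α → β → Bool) : Prop :=
  ∀ i j : β, ¬ ∃ r r' r'' : α, M r i = true ∧ M r j = true ∧ M r' i = true ∧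
    M r' j = false ∧ M r'' i = false ∧ M r'' j = true

/-- `M'` is a row split of `M` via the assignment `f` of rows of `M'` to rows of `M`:
the parts are nonempty (`f` surjective) and each row of `M` is the bitwise OR of its part. -/
def IsRowSplit {α α' β : Type*} (M : α → β → Bool) (M' : α' → β → Bool) (f : α' → α) : Prop :=
  Function.Surjective f ∧ ∀ i j, M i j = true ↔ ∃ r', f r' = i ∧ M' r' j = true

/-- `v` is a vertex of the containment digraph `D_M`, i.e. the support of some column. -/
def IsSupport {α β : Type*} [Fintype α] [DecidableEq α] (M : α → β → Bool)
    (v : Finset α) : Prop := ∃ j, v = Supp M j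

/-- `B` is a branching of the containment digraph `D_M`: its arcs are arcs of `D_M`
(proper inclusions of supports) and every vertex has at most one outgoing arc. -/
def IsBranching {α β : Type*} [Fintype α] [DecidableEq α] (M : α → β → Bool)
    (B : Finset α → Finset α → Prop) : Prop :=
  (∀ u v, B u v → IsSupport M u ∧ IsSupport M v ∧ u ⊂ v) ∧
  (∀ u v w, B u v → B u w → v = w)

/-- The set `U(B)` of `B`-uncovered pairs `(r, v)`: `v` a vertex of `D_M`, `r ∈ v`, and
`r` belongs to no `B`-in-neighbor of `v`. -/
def UncovPairs {α β : Type*} [Fintype α] [DecidableEq α] (M : α → β → Bool)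
    (B : Finset α → Finset α → Prop) : Set (α × Finset α) :=
  {p | IsSupport M p.2 ∧ p.1 ∈ p.2 ∧ ∀ u, B u p.2 → p.1 ∉ u}

/-- The set `I(B)` of `B`-irreducible vertices of `D_M`. -/
def IrredVerts {α β : Type*} [Fintype α] [DecidableEq α] (M : α → β → Bool)
    (B : Finset α → Finset α → Prop) : Set (Finset α) :=
  {v | IsSupport M v ∧ ∃ r ∈ v, ∀ u, B u v → r ∉ u}

/-- `γ(M)`: the minimum number of rows of a conflict-free row split of `M`. -/
noncomputable def gammaM {α β : Type*} (M : α → β → Bool) : ℕ :=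
  sInf {k | ∃ (m' : ℕ) (M' : Fin m' → β → Bool) (f : Fin m' → α),
    IsRowSplit M M' f ∧ ConflictFree M' ∧ k = m'}

/-- `η(M)`: the minimum number of pairwise distinct rows of a conflict-free row split of `M`. -/
noncomputable def etaM {α β : Type*} [Fintype β] [DecidableEq β] (M : α → β → Bool) : ℕ :=
  sInf {k | ∃ (m' : ℕ) (M' : Fin m' → β → Bool) (f : Fin m' → α),
    IsRowSplit M M' f ∧ ConflictFree M' ∧
    k = (Finset.univ.image (fun r : Fin m' => fun j => M' r j)).card}

/-- `β(M)`: the minimum number of uncovered pairs over all branchings of `D_M`. -/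
noncomputable def betaM {α β : Type*} [Fintype α] [DecidableEq α] (M : α → β → Bool) : ℕ :=
  sInf {k | ∃ B, IsBranching M B ∧ (UncovPairs M B).ncard = k}

/-- `ζ(M)`: the minimum number of irreducible vertices over all branchings of `D_M`. -/
noncomputable def zetaM {α β : Type*} [Fintype α] [DecidableEq α] (M : α → β → Bool) : ℕ :=
  sInf {k | ∃ B, IsBranching M B ∧ (IrredVerts M B).ncard = k}

/-
Conflict-freeness says exactly that two column supports are either nested or disjoint, so the
distinct columns form a laminar family of nonempty subsets of the `m` rows. A laminar family `F`
of nonempty sets satisfies `|F| + #(maximal members) ≤ 2 |⋃ F|`: split off an inclusion-maximal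
member `v`; the members strictly inside `v` either miss a point of `v` or cover `v` with at least
two maximal members, and in both cases they number at most `2 |v| - 2`, while the members not
inside `v` are disjoint from `v` and are handled by induction.
-/

open Finset

section Laminar

variable {α : Type*} {F G : Finset (Finset α)} {u v : Finset α}

def IsLaminar (F : Finset (Finset α)) : Prop :=
  ∀ u ∈ F, ∀ v ∈ F, u ⊆ v ∨ v ⊆ u ∨ Disjoint u v

open Classical in
noncomputable def maximals (F : Finset (Finset α)) : Finset (Finset α) :=
  {u ∈ F | Maximal (· ∈ F) u}

@[simp]
lemma mem_maximals : u ∈ maximals F ↔ Maximal (· ∈ F) u := by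
  classical
  simpa [maximals] using fun h : Maximal (· ∈ F) u => h.prop

lemma IsLaminar.mono (hF : IsLaminar F) (hG : G ⊆ F) : IsLaminar G :=
  fun u hu v hv => hF u (hG hu) v (hG hv)

lemma IsLaminar.disjoint_of_maximal (hF : IsLaminar F) (hv : Maximal (· ∈ F) v) (hu : u ∈ F)
    (huv : ¬ u ⊆ v) : Disjoint v u := by
  rcases hF v hv.prop u hu with h | h | h
  · exact absurd (hv.2 hu h) huv
  · exact absurd h huv
  · exact h

variable [DecidableEq α]

lemma card_maximals_le_succ (hv : Maximal (· ∈ F) v) :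
    #(maximals F) ≤ #(maximals {u ∈ F | ¬ u ⊆ v}) + 1 := by
  refine (card_le_card fun w hw => ?_).trans (card_insert_le v _)
  rw [mem_maximals] at hw
  by_cases hwv : w ⊆ v
  · exact mem_insert.2 (Or.inl (hw.eq_of_le hv.prop hwv))
  · refine mem_insert_of_mem (mem_maximals.2 ⟨mem_filter.2 ⟨hw.prop, hwv⟩, ?_⟩)
    exact fun y hy => hw.2 (mem_filter.1 hy).1

lemma two_le_card_maximals (hF : ∀ u ∈ F, u ⊂ v) (hsup : F.sup id = v) (hne : F.Nonempty) :
    2 ≤ #(maximals F) := by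
  by_contra! h
  obtain ⟨u, hu⟩ := F.exists_maximal hne
  have hunique := card_le_one.1 (Nat.lt_succ_iff.1 h) u (mem_maximals.2 hu)
  have hsup_le : F.sup id ⊆ u := Finset.sup_le fun w hw => by
    obtain ⟨b, hwb, hb⟩ := F.exists_le_maximal hw
    exact hunique b (mem_maximals.2 hb) ▸ hwb
  exact (hF u hu.prop).not_subset (hsup ▸ hsup_le)

lemma card_add_two_le_of_forall_ssubset (hv : v.Nonempty) (hF : ∀ u ∈ F, u ⊂ v)
    (hbound : #F + #(maximals F) ≤ 2 * #(F.sup id)) : #F + 2 ≤ 2 * #v := by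
  obtain rfl | hne := F.eq_empty_or_nonempty
  · simpa using hv.card_pos
  have hsup_le : F.sup id ⊆ v := Finset.sup_le fun u hu => (hF u hu).subset
  obtain hsup | hsup := hsup_le.eq_or_ssubset
  · have := two_le_card_maximals hF hsup hne
    rw [hsup] at hbound
    omega
  · have := card_lt_card hsup
    omega

theorem IsLaminar.card_add_card_maximals_le (hF : IsLaminar F) (hne : ∀ u ∈ F, u.Nonempty) :
    #F + #(maximals F) ≤ 2 * #(F.sup id) := by
  induction F using Finset.strongInduction with
  | H F ih =>
  obtain rfl | hFne := F.eq_empty_or_nonempty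
  · simp [maximals]
  obtain ⟨v, hv⟩ := F.exists_maximal hFne
  set below := {u ∈ F | u ⊆ v}
  set rest := {u ∈ F | ¬ u ⊆ v}
  have hv_below : v ∈ below := mem_filter.2 ⟨hv.prop, subset_rfl⟩
  have h_below : #(below.erase v) + 2 ≤ 2 * #v := by
    have hssub : ∀ u ∈ below.erase v, u ⊂ v := fun u hu =>
      ((mem_filter.1 (mem_of_mem_erase hu)).2).ssubset_of_ne (ne_of_mem_erase hu)
    have hsub : below.erase v ⊂ F := (erase_ssubset hv_below).trans_subset (filter_subset _ _)
    refine card_add_two_le_of_forall_ssubset (hne v hv.prop) hssub (ih _ hsub ?_ ?_)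
    · exact hF.mono hsub.subset
    · exact fun u hu => hne u (hsub.subset hu)
  have h_rest : #rest + #(maximals rest) ≤ 2 * #(rest.sup id) := by
    have hsub : rest ⊂ F := ssubset_iff_of_subset (filter_subset _ _) |>.2
      ⟨v, hv.prop, fun h => (mem_filter.1 h).2 subset_rfl⟩
    exact ih _ hsub (hF.mono hsub.subset) fun u hu => hne u (hsub.subset hu)
  have hcard : #F = #(below.erase v) + 1 + #rest := by
    rw [card_erase_add_one hv_below, card_filter_add_card_filter_not]
  have hsup : #v + #(rest.sup id) ≤ #(F.sup id) := by
    have hdisj : Disjoint v (rest.sup id) := Finset.disjoint_sup_right.2 fun u hu =>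
      hF.disjoint_of_maximal hv (mem_filter.1 hu).1 (mem_filter.1 hu).2
    rw [← card_union_of_disjoint hdisj]
    exact card_le_card (union_subset (le_sup (f := id) hv.prop) (sup_mono (filter_subset _ _)))
  have hmax : #(maximals F) ≤ #(maximals rest) + 1 := card_maximals_le_succ hv
  omega

theorem IsLaminar.card_le_two_mul_card [Fintype α] (hF : IsLaminar F)
    (hne : ∀ u ∈ F, u.Nonempty) : #F ≤ 2 * Fintype.card α := by
  have := hF.card_add_card_maximals_le hne
  have := card_le_univ (F.sup id)
  omega

end Laminar

section Matrix

variable {α β : Type*} [Fintype α] [DecidableEq α]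

lemma ConflictFree.isLaminar_image_supp [Fintype β] {M : α → β → Bool}
    (hcf : ConflictFree M) :
    IsLaminar (univ.image (Supp M)) := by
  simp only [IsLaminar, mem_image, mem_univ, true_and, forall_exists_index,
    forall_apply_eq_imp_iff]
  intro i j
  by_contra! h
  obtain ⟨r', hr'i, hr'j⟩ := not_subset.1 h.1
  obtain ⟨r'', hr''j, hr''i⟩ := not_subset.1 h.2.1
  obtain ⟨r, hri, hrj⟩ := not_disjoint_iff.1 h.2.2
  simp only [Supp, mem_filter, mem_univ, true_and, Bool.not_eq_true]
    at hri hrj hr'i hr'j hr''i hr''j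
  exact hcf i j ⟨r, r', r'', hri, hrj, hr'i, hr'j, hr''i, hr''j⟩

lemma card_image_columns_eq_card_image_supp [Fintype β] (M : α → β → Bool) :
    #(univ.image fun j r => M r j) = #(univ.image (Supp M)) := by
  have hinj : Function.Injective fun c : α → Bool => ({r | c r = true} : Finset α) := by
    intro c c' h
    funext r
    simpa using congrArg (r ∈ ·) h
  rw [← card_image_of_injective _ hinj, image_image]
  rfl

end Matrix

theorem stmt_5_general {m n : ℕ} (M : Fin m → Fin n → Bool)
    (hcol : ∀ j, ∃ r, M r j = true)
    (hcf : ConflictFree M) :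
    (Finset.univ.image (fun j : Fin n => fun r : Fin m => M r j)).card ≤ 2 * m := by
  rw [card_image_columns_eq_card_image_supp]
  have hne : ∀ u ∈ univ.image (Supp M), u.Nonempty := by
    simp only [mem_image, mem_univ, true_and, forall_exists_index, forall_apply_eq_imp_iff]
    intro j
    obtain ⟨r, hr⟩ := hcol j
    exact ⟨r, by simp [Supp, hr]⟩
  simpa using hcf.isLaminar_image_supp.card_le_two_mul_card hne

/-- A conflict-free binary matrix with `m` rows, no all-zero row and no all-zero column,
has at most `2m` pairwise distinct columns. -/
theorem stmt_5 {m n : ℕ} (M : Fin m → Fin n → Bool)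
    (hrow : ∀ r, ∃ j, M r j = true)
    (hcol : ∀ j, ∃ r, M r j = true)
    (hcf : ConflictFree M) :
    (Finset.univ.image (fun j : Fin n => fun r : Fin m => M r j)).card ≤ 2 * m :=
  stmt_5_general M hcol hcf
end

section
/- Let M be a binary matrix without duplicated columns and let B be a branching of the containment digraph D_M of M. Then the B-split M^B of M is conflict-free, i.e., no two columns of M^B are in conflict. -/
/-- `(r, j)` is a `B`-uncovered pair (indexing vertices of `D_M` by columns, which is valid
since the columns of `M` are pairwise distinct). -/
def UncovIdx {m n : ℕ} (M : Fin m → Fin n → Bool) (B : Fin n → Fin n → Prop)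
    (p : Fin m × Fin n) : Prop :=
  p.1 ∈ Supp M p.2 ∧ ∀ u, B u p.2 → p.1 ∉ Supp M u

/-- The entry of the `B`-split `M^B` in row `(r, v)` and column `j`:
`1` iff `v_j` is reachable from `v` in the branching `B`. -/
def MBentry {m n : ℕ} (B : Fin n → Fin n → Prop) (p : Fin m × Fin n) (j : Fin n) : Prop :=
  Relation.ReflTransGen B p.2 j

lemma det_comparable {n : ℕ} {B : Fin n → Fin n → Prop}
    (hBout : ∀ u v w : Fin n, B u v → B u w → v = w) {v i j : Fin n}
    (hi : Relation.ReflTransGen B v i) (hj : Relation.ReflTransGen B v j) :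
    Relation.ReflTransGen B i j ∨ Relation.ReflTransGen B j i := by
  induction hi using Relation.ReflTransGen.head_induction_on with
  | refl => exact Or.inl hj
  | head hvw hwi ih =>
    rcases Relation.ReflTransGen.cases_head hj with rfl | ⟨u, hvu, huj⟩
    · exact Or.inr (Relation.ReflTransGen.head hvw hwi)
    · exact ih (hBout _ _ _ hvw hvu ▸ huj)

/-- The `B`-split `M^B` of a matrix `M` with distinct, nonzero columns is conflict-free. -/
theorem stmt_7 {m n : ℕ} (M : Fin m → Fin n → Bool)
    (hdist : ∀ j j' : Fin n, Supp M j = Supp M j' → j = j')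
    (hnz : ∀ j, (Supp M j).Nonempty)
    (B : Fin n → Fin n → Prop)
    (hBarc : ∀ j j', B j j' → Supp M j ⊂ Supp M j')
    (hBout : ∀ j j' j'', B j j' → B j j'' → j' = j'') :
    ∀ i j : Fin n,
      ¬ ∃ p p' p'' : {q : Fin m × Fin n // UncovIdx M B q},
        MBentry B p.1 i ∧ MBentry B p.1 j ∧ MBentry B p'.1 i ∧
        ¬ MBentry B p'.1 j ∧ ¬ MBentry B p''.1 i ∧ MBentry B p''.1 j := by
  intro i j
  rintro ⟨p, p', p'', hpi, hpj, hp1i, hp1j, hp2i, hp2j⟩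
  rcases det_comparable hBout hpi hpj with hij | hji
  · exact hp1j (hp1i.trans hij)
  · exact hp2i (hp2j.trans hji)
end

section
/- Let M be a binary matrix without duplicated columns and let B be a branching of the containment digraph D_M. Then M^B is a row split of M: for each row r of M, r equals the bitwise OR of the rows of M^B indexed by the pairs in U(B) whose first coordinate is r. -/
/-- The `B`-split `M^B` is a row split of `M`: every row `r` of `M` is the bitwise OR of the
rows of `M^B` indexed by the uncovered pairs with first coordinate `r`. -/
theorem stmt_8 {m n : ℕ} (M : Fin m → Fin n → Bool)
    (hdist : ∀ j j' : Fin n, Supp M j = Supp M j' → j = j')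
    (hnz : ∀ j, (Supp M j).Nonempty)
    (B : Fin n → Fin n → Prop)
    (hBarc : ∀ j j', B j j' → Supp M j ⊂ Supp M j')
    (hBout : ∀ j j' j'', B j j' → B j j'' → j' = j'') :
    ∀ (r : Fin m) (j : Fin n),
      M r j = true ↔ ∃ v : Fin n, UncovIdx M B (r, v) ∧ Relation.ReflTransGen B v j := by
  intro r j
  have hmem : ∀ j : Fin n, r ∈ Supp M j ↔ M r j = true := by
    intro j; simp [Supp]
  constructor
  · intro h
    have key : ∀ k (j : Fin n), (Supp M j).card ≤ k → r ∈ Supp M j →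
        ∃ v, UncovIdx M B (r, v) ∧ Relation.ReflTransGen B v j := by
      intro k
      induction k with
      | zero =>
        intro j hc hr
        exact absurd (Finset.card_pos.mpr ⟨r, hr⟩) (by omega)
      | succ k ih =>
        intro j hc hr
        by_cases huncov : ∀ u, B u j → r ∉ Supp M u
        · exact ⟨j, ⟨hr, huncov⟩, Relation.ReflTransGen.refl⟩
        · push_neg at huncov
          obtain ⟨u, hBu, hru⟩ := huncov
          have hsub := hBarc u j hBu
          have hlt : (Supp M u).card < (Supp M j).card := Finset.card_lt_card hsub
          obtain ⟨v, hv, hpath⟩ := ih u (by omega) hru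
          exact ⟨v, hv, hpath.tail hBu⟩
    exact key (Supp M j).card j le_rfl ((hmem j).mpr h)
  · rintro ⟨v, ⟨hrv, -⟩, hpath⟩
    have : r ∈ Supp M j := by
      induction hpath with
      | refl => exact hrv
      | tail _ hB ih => exact (hBarc _ _ hB).subset ih
    exact (hmem j).mp this
end

section
/- Let M be a binary matrix without duplicated columns and B a branching of its containment digraph D_M. Then the number of pairwise distinct rows of the B-split M^B equals |I(B)|, the number of B-irreducible vertices of D_M. -/
/-- The number of pairwise distinct rows of the `B`-split `M^B` equals the number `|I(B)|`
of `B`-irreducible vertices of `D_M`. -/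
theorem stmt_9 {m n : ℕ} (M : Fin m → Fin n → Bool)
    (hdist : ∀ j j' : Fin n, Supp M j = Supp M j' → j = j')
    (hnz : ∀ j, (Supp M j).Nonempty)
    (B : Fin n → Fin n → Prop)
    (hBarc : ∀ j j', B j j' → Supp M j ⊂ Supp M j')
    (hBout : ∀ j j' j'', B j j' → B j j'' → j' = j'') :
    {f : Fin n → Prop | ∃ p : Fin m × Fin n, UncovIdx M B p ∧
        f = fun j => Relation.ReflTransGen B p.2 j}.ncard =
      {v : Fin n | ∃ r : Fin m, UncovIdx M B (r, v)}.ncard := by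
  have mono : ∀ a b : Fin n, Relation.ReflTransGen B a b → Supp M a ⊆ Supp M b := by
    intro a b h
    induction h with
    | refl => exact subset_rfl
    | tail _ hbc ih => exact ih.trans (hBarc _ _ hbc).subset
  have ginj : Function.Injective
      (fun v : Fin n => (fun j => Relation.ReflTransGen B v j : Fin n → Prop)) := by
    intro v v' h
    have h1 : Relation.ReflTransGen B v v' := by
      have := congrFun h v'
      simp only at this
      rw [this]
    have h2 : Relation.ReflTransGen B v' v := by
      have := congrFun h v
      simp only at this
      rw [← this]
    exact hdist _ _ (subset_antisymm (mono _ _ h1) (mono _ _ h2))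
  have hs : {f : Fin n → Prop | ∃ p : Fin m × Fin n, UncovIdx M B p ∧
        f = fun j => Relation.ReflTransGen B p.2 j} =
      (fun v : Fin n => (fun j => Relation.ReflTransGen B v j : Fin n → Prop)) ''
        {v : Fin n | ∃ r : Fin m, UncovIdx M B (r, v)} := by
    ext f
    constructor
    · rintro ⟨⟨r, v⟩, hp, rfl⟩
      exact ⟨v, ⟨r, hp⟩, rfl⟩
    · rintro ⟨v, ⟨r, hr⟩, rfl⟩
      exact ⟨(r, v), hr, rfl⟩
  rw [hs, Set.ncard_image_of_injective _ ginj]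
end

section
/- Let M be a binary matrix without duplicated columns and let M' be a conflict-free row split of M. For columns i, j, let v'_i, v'_j be the supports of the corresponding columns of M' and v_i, v_j the supports of columns i, j of M. If v'_i ⊊ v'_j, then v_i ⊊ v_j. In other words, every arc of the containment digraph D_{M'} (between columns corresponding to columns of M) induces an arc of D_M. -/
/-- For a conflict-free row split `M'` of a matrix `M` without duplicated columns,
every arc of `D_{M'}` induces an arc of `D_M`: `v'_i ⊊ v'_j` implies `v_i ⊊ v_j`. -/
theorem stmt_10 {m m' n : ℕ} (M : Fin m → Fin n → Bool) (M' : Fin m' → Fin n → Bool)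
    (hdist : ∀ j j' : Fin n, (fun r => M r j) = (fun r => M r j') → j = j')
    (f : Fin m' → Fin m)
    (hsplit : IsRowSplit M M' f)
    (hcf : ConflictFree M')
    (i j : Fin n) (h : Supp M' i ⊂ Supp M' j) :
    Supp M i ⊂ Supp M j := by
  obtain ⟨hsurj, hOR⟩ := hsplit
  have hsub : Supp M i ⊆ Supp M j := by
    intro r hr
    simp only [Supp, Finset.mem_filter, Finset.mem_univ, true_and] at hr ⊢
    obtain ⟨r', hfr', hr'⟩ := (hOR r i).mp hr
    have hr'j : r' ∈ Supp M' j := h.subset (by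
      simp only [Supp, Finset.mem_filter, Finset.mem_univ, true_and]; exact hr')
    simp only [Supp, Finset.mem_filter, Finset.mem_univ, true_and] at hr'j
    exact (hOR r j).mpr ⟨r', hfr', hr'j⟩
  refine ⟨hsub, fun hsub' => ?_⟩
  have hcols : (fun r => M r i) = (fun r => M r j) := by
    funext r
    by_cases hri : M r i = true
    · have : r ∈ Supp M i := by
        simp only [Supp, Finset.mem_filter, Finset.mem_univ, true_and]; exact hri
      have := hsub this
      simp only [Supp, Finset.mem_filter, Finset.mem_univ, true_and] at this
      rw [hri, this]
    · by_cases hrj : M r j = true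
      · have : r ∈ Supp M j := by
          simp only [Supp, Finset.mem_filter, Finset.mem_univ, true_and]; exact hrj
        have := hsub' this
        simp only [Supp, Finset.mem_filter, Finset.mem_univ, true_and] at this
        exact absurd this hri
      · simp only [Bool.not_eq_true] at hri hrj
        rw [hri, hrj]
  have := hdist i j hcols
  subst this
  exact h.ne rfl
end

section
/- Let M be a binary matrix without duplicated columns and M' a conflict-free row split of M. Define B to be the set of pairs (v_i, v_j) such that v'_i ≠ ∅ and (v'_i, v'_j) is an elementary arc of D_{M'} (i.e., v'_i ⊊ v'_j and there is no k with v'_i ⊊ v'_k ⊊ v'_j). Then B is a branching of D_M: each vertex of D_M has at most one outgoing arc in B. -/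
/-- The set of pairs `(v_i, v_j)` with `v'_i ≠ ∅` and `(v'_i, v'_j)` an elementary arc of
`D_{M'}` is a branching of `D_M`: at most one outgoing arc per vertex. -/
theorem stmt_11 {m m' n : ℕ} (M : Fin m → Fin n → Bool) (M' : Fin m' → Fin n → Bool)
    (hdist : ∀ j j' : Fin n, (fun r => M r j) = (fun r => M r j') → j = j')
    (f : Fin m' → Fin m)
    (hsplit : IsRowSplit M M' f)
    (hcf : ConflictFree M') :
    ∀ i j k : Fin n,
      ((Supp M' i).Nonempty ∧ Supp M' i ⊂ Supp M' j ∧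
        ¬ ∃ l : Fin n, Supp M' i ⊂ Supp M' l ∧ Supp M' l ⊂ Supp M' j) →
      ((Supp M' i).Nonempty ∧ Supp M' i ⊂ Supp M' k ∧
        ¬ ∃ l : Fin n, Supp M' i ⊂ Supp M' l ∧ Supp M' l ⊂ Supp M' k) →
      j = k := by
  intro i j k ⟨hne, hij, hjel⟩ ⟨_, hik, hkel⟩
  have hsub : Supp M' j ⊆ Supp M' k ∨ Supp M' k ⊆ Supp M' j := by
    by_contra h
    push_neg at h
    obtain ⟨h1, h2⟩ := h
    obtain ⟨r', hr'1, hr'2⟩ := Finset.not_subset.mp h1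
    obtain ⟨r'', hr''1, hr''2⟩ := Finset.not_subset.mp h2
    obtain ⟨r, hr⟩ := hne
    have hrj : r ∈ Supp M' j := hij.1 hr
    have hrk : r ∈ Supp M' k := hik.1 hr
    simp only [Supp, Finset.mem_filter, Finset.mem_univ, true_and] at hrj hrk hr'1 hr'2 hr''1 hr''2
    exact hcf j k ⟨r, r', r'', hrj, hrk, hr'1, by simpa using hr'2, by simpa using hr''2, hr''1⟩
  have heq : Supp M' j = Supp M' k := by
    rcases hsub with h | h
    · rcases h.ssubset_or_eq with h' | h'
      · exact absurd ⟨j, hij, h'⟩ hkel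
      · exact h'
    · rcases h.ssubset_or_eq with h' | h'
      · exact absurd ⟨k, hik, h'⟩ hjel
      · exact h'.symm
  apply hdist
  funext r
  have h1 := (hsplit.2 r j)
  have h2 := (hsplit.2 r k)
  have hmem : ∀ (r' : Fin m') (l : Fin n), M' r' l = true ↔ r' ∈ Supp M' l := by
    intro r' l; simp [Supp]
  by_cases hj : M r j = true
  · obtain ⟨r', hf, hm⟩ := h1.1 hj
    have : M' r' k = true := (hmem r' k).2 (heq ▸ (hmem r' j).1 hm)
    rw [hj, (h2.2 ⟨r', hf, this⟩)]
  · by_cases hk : M r k = true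
    · obtain ⟨r', hf, hm⟩ := h2.1 hk
      have : M' r' j = true := (hmem r' j).2 (heq ▸ (hmem r' k).1 hm)
      exact absurd (h1.2 ⟨r', hf, this⟩) hj
    · simp [Bool.not_eq_true] at hj hk; rw [hj, hk]
end

section
/- For every binary matrix M (with no all-zero row), γ(M) = β(M): the minimum number of rows in a conflict-free row split of M equals the minimum, over all branchings B of the containment digraph D_M, of the number of B-uncovered pairs |U(B)|. -/
section PartA

variable {α β : Type*} [Fintype α] [DecidableEq α] {M : α → β → Bool}
  {B : Finset α → Finset α → Prop}

lemma mem_Supp_iff (M : α → β → Bool) (j : β) (r : α) :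
    r ∈ Supp M j ↔ M r j = true := by simp [Supp]

lemma reach_subset (hB : IsBranching M B) {v w : Finset α}
    (h : Relation.ReflTransGen B v w) : v ⊆ w := by
  induction h with
  | refl => exact subset_rfl
  | tail _ hbc ih => exact ih.trans (hB.1 _ _ hbc).2.2.subset

lemma descend (hB : IsBranching M B) (r : α) :
    ∀ v : Finset α, IsSupport M v → r ∈ v →
      ∃ v', (r, v') ∈ UncovPairs M B ∧ Relation.ReflTransGen B v' v := by
  intro v
  induction v using Finset.strongInductionOn with
  | _ v ih =>
    intro hv hr
    by_cases h : ∃ u, B u v ∧ r ∈ u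
    · obtain ⟨u, hu, hru⟩ := h
      have harc := hB.1 _ _ hu
      obtain ⟨v', h1, h2⟩ := ih u harc.2.2 harc.1 hru
      exact ⟨v', h1, h2.tail hu⟩
    · push_neg at h
      exact ⟨v, ⟨hv, hr, h⟩, Relation.ReflTransGen.refl⟩

lemma reach_comparable (hB : IsBranching M B) {b c : Finset α} :
    ∀ {a : Finset α}, Relation.ReflTransGen B a b → Relation.ReflTransGen B a c →
      Relation.ReflTransGen B b c ∨ Relation.ReflTransGen B c b := by
  intro a hab
  induction hab using Relation.ReflTransGen.head_induction_on with
  | refl => exact fun h => Or.inl h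
  | head hstep htail ih =>
    intro hac
    rcases Relation.ReflTransGen.cases_head hac with rfl | ⟨d, hd, hdc⟩
    · exact Or.inr (htail.head hstep)
    · have : _ = d := hB.2 _ _ _ hstep hd
      subst this
      exact ih hdc

end PartA

lemma gamma_mem {m n : ℕ} (M : Fin m → Fin n → Bool) (hrow : ∀ r, ∃ j, M r j = true)
    {B : Finset (Fin m) → Finset (Fin m) → Prop} (hB : IsBranching M B) :
    (UncovPairs M B).ncard ∈ {k | ∃ (m' : ℕ) (M' : Fin m' → Fin n → Bool) (f : Fin m' → Fin m),
      IsRowSplit M M' f ∧ ConflictFree M' ∧ k = m'} := by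
  classical
  set U := UncovPairs M B with hUdef
  haveI : Fintype ↥U := (Set.toFinite U).fintype
  have hcard : Fintype.card ↥U = U.ncard := by
    rw [Set.ncard_eq_toFinset_card', Set.toFinset_card]
  obtain e : Fin (U.ncard) ≃ ↥U := (Fintype.equivFinOfCardEq hcard).symm
  refine ⟨U.ncard, fun i c => decide (Relation.ReflTransGen B ((e i).1.2) (Supp M c)),
    fun i => (e i).1.1, ⟨?_, ?_⟩, ?_, rfl⟩
  · -- surjective
    intro r
    obtain ⟨j, hj⟩ := hrow r
    have hr : r ∈ Supp M j := (mem_Supp_iff M j r).mpr hj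
    obtain ⟨v', hv', -⟩ := descend hB r (Supp M j) ⟨j, rfl⟩ hr
    refine ⟨e.symm ⟨(r, v'), hv'⟩, ?_⟩
    simp only [Equiv.apply_symm_apply]
  · -- OR condition
    intro r c
    constructor
    · intro hM
      have hr : r ∈ Supp M c := (mem_Supp_iff M c r).mpr hM
      obtain ⟨v', hv', hreach⟩ := descend hB r (Supp M c) ⟨c, rfl⟩ hr
      refine ⟨e.symm ⟨(r, v'), hv'⟩, ?_, ?_⟩
      · simp only [Equiv.apply_symm_apply]
      · simp only [Equiv.apply_symm_apply]
        exact decide_eq_true hreach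
    · rintro ⟨i, hfi, hMi⟩
      have hreach : Relation.ReflTransGen B ((e i).1.2) (Supp M c) := of_decide_eq_true hMi
      have hsub : (e i).1.2 ⊆ Supp M c := reach_subset hB hreach
      have hmem : (e i).1.1 ∈ (e i).1.2 := (e i).2.2.1
      rw [← hfi, ← mem_Supp_iff]
      exact hsub hmem
  · -- conflict-free
    rintro c d ⟨i1, i2, i3, h11, h12, h21, h22, h31, h32⟩
    have r11 : Relation.ReflTransGen B ((e i1).1.2) (Supp M c) := of_decide_eq_true h11
    have r12 : Relation.ReflTransGen B ((e i1).1.2) (Supp M d) := of_decide_eq_true h12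
    have r21 : Relation.ReflTransGen B ((e i2).1.2) (Supp M c) := of_decide_eq_true h21
    have r32 : Relation.ReflTransGen B ((e i3).1.2) (Supp M d) := of_decide_eq_true h32
    rcases reach_comparable hB r11 r12 with h | h
    · have : Relation.ReflTransGen B ((e i2).1.2) (Supp M d) := r21.trans h
      exact absurd this (of_decide_eq_false h22)
    · have : Relation.ReflTransGen B ((e i3).1.2) (Supp M c) := r32.trans h
      exact absurd this (of_decide_eq_false h31)

section PartB

variable {m n m' : ℕ}

open Classical in
/-- For a vertex `v` of `D_M`, the set of rows of `M'` with a 1 in a chosen column whose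
`M`-support is `v`. -/
noncomputable def Scal (M : Fin m → Fin n → Bool) (M' : Fin m' → Fin n → Bool)
    (v : Finset (Fin m)) : Finset (Fin m') :=
  if h : IsSupport M v then Supp M' h.choose else ∅

/-- The branching constructed from a conflict-free row split. -/
def Brel (M : Fin m → Fin n → Bool) (M' : Fin m' → Fin n → Bool)
    (u v : Finset (Fin m)) : Prop :=
  IsSupport M u ∧ u.Nonempty ∧ IsSupport M v ∧ Scal M M' u ⊂ Scal M M' v ∧
    ∀ x, IsSupport M x → Scal M M' u ⊂ Scal M M' x → Scal M M' v ⊆ Scal M M' x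

variable {M : Fin m → Fin n → Bool} {M' : Fin m' → Fin n → Bool} {f : Fin m' → Fin m}

lemma supp_img (hsplit : IsRowSplit M M' f) (c : Fin n) :
    Supp M c = (Supp M' c).image f := by
  ext r
  simp only [Supp, Finset.mem_filter, Finset.mem_univ, true_and, Finset.mem_image]
  rw [hsplit.2 r c]
  constructor
  · rintro ⟨r', h1, h2⟩; exact ⟨r', h2, h1⟩
  · rintro ⟨r', h2, h1⟩; exact ⟨r', h1, h2⟩

lemma lam_col (hcf : ConflictFree M') (c d : Fin n)
    (hne : (Supp M' c ∩ Supp M' d).Nonempty) :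
    Supp M' c ⊆ Supp M' d ∨ Supp M' d ⊆ Supp M' c := by
  obtain ⟨r, hr⟩ := hne
  rw [Finset.mem_inter, mem_Supp_iff, mem_Supp_iff] at hr
  by_contra h
  push_neg at h
  obtain ⟨h1, h2⟩ := h
  obtain ⟨r', hr'c, hr'd⟩ := Finset.not_subset.mp h1
  obtain ⟨r'', hr''d, hr''c⟩ := Finset.not_subset.mp h2
  rw [mem_Supp_iff] at hr'c hr''d
  simp only [mem_Supp_iff, Bool.not_eq_true] at hr'd hr''c
  exact hcf c d ⟨r, r', r'', hr.1, hr.2, hr'c, hr'd, hr''c, hr''d⟩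

lemma Scal_img (hsplit : IsRowSplit M M' f) {v : Finset (Fin m)} (hv : IsSupport M v) :
    v = (Scal M M' v).image f := by
  have h1 : Scal M M' v = Supp M' hv.choose := dif_pos hv
  rw [h1, ← supp_img hsplit]
  exact hv.choose_spec

lemma Scal_col {v : Finset (Fin m)} (hv : IsSupport M v) :
    ∃ c, Scal M M' (v : Finset (Fin m)) = Supp M' c :=
  ⟨hv.choose, dif_pos hv⟩

lemma Scal_ne (hsplit : IsRowSplit M M' f) {v : Finset (Fin m)} (hv : IsSupport M v)
    (hne : v.Nonempty) : (Scal M M' v).Nonempty := by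
  obtain ⟨r, hr⟩ := hne
  rw [Scal_img hsplit hv] at hr
  obtain ⟨r', hr', -⟩ := Finset.mem_image.mp hr
  exact ⟨r', hr'⟩

lemma Scal_mono (hsplit : IsRowSplit M M' f) {v w : Finset (Fin m)} (hv : IsSupport M v)
    (hw : IsSupport M w) (h : Scal M M' v ⊆ Scal M M' w) : v ⊆ w := by
  rw [Scal_img hsplit hv, Scal_img hsplit hw]
  exact Finset.image_subset_image h

lemma Scal_inj (hsplit : IsRowSplit M M' f) {v w : Finset (Fin m)} (hv : IsSupport M v)
    (hw : IsSupport M w) (h : Scal M M' v = Scal M M' w) : v = w := by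
  rw [Scal_img hsplit hv, Scal_img hsplit hw, h]

lemma lam_Scal (hcf : ConflictFree M') {v w : Finset (Fin m)} (hv : IsSupport M v)
    (hw : IsSupport M w) (hne : (Scal M M' v ∩ Scal M M' w).Nonempty) :
    Scal M M' v ⊆ Scal M M' w ∨ Scal M M' w ⊆ Scal M M' v := by
  obtain ⟨c, hc⟩ := Scal_col (M' := M') hv
  obtain ⟨d, hd⟩ := Scal_col (M' := M') hw
  rw [hc, hd] at hne ⊢
  exact lam_col hcf c d hne

lemma Brel_branching (hsplit : IsRowSplit M M' f) : IsBranching M (Brel M M') := by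
  constructor
  · rintro u v ⟨hu, hune, hv, hss, -⟩
    refine ⟨hu, hv, ?_⟩
    rw [Finset.ssubset_iff_subset_ne]
    refine ⟨Scal_mono hsplit hu hv hss.subset, fun h => ?_⟩
    rw [h] at hss
    exact hss.ne rfl
  · rintro u v w ⟨-, -, hv, hssv, hminv⟩ ⟨-, -, hw, hssw, hminw⟩
    exact Scal_inj hsplit hv hw
      (le_antisymm (hminv w hw hssw) (hminw v hv hssv))

lemma Brel_out (hsplit : IsRowSplit M M' f) (hcf : ConflictFree M')
    {u : Finset (Fin m)} (hu : IsSupport M u) (hune : u.Nonempty)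
    {w : Finset (Fin m)} (hw : IsSupport M w) (hsw : Scal M M' u ⊂ Scal M M' w) :
    ∃ v, Brel M M' u v ∧ Scal M M' v ⊆ Scal M M' w := by
  classical
  obtain ⟨x, hxT, hxmin⟩ := Finset.exists_min_image
    (Finset.univ.filter (fun x => IsSupport M x ∧ Scal M M' u ⊂ Scal M M' x))
    (fun x => (Scal M M' x).card) ⟨w, by simp [hw, hsw]⟩
  simp only [Finset.mem_filter, Finset.mem_univ, true_and] at hxT
  have hmin : ∀ y, IsSupport M y → Scal M M' u ⊂ Scal M M' y →
      Scal M M' x ⊆ Scal M M' y := by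
    intro y hy hsy
    have hcard := hxmin y (by simp [hy, hsy])
    have hne : (Scal M M' x ∩ Scal M M' y).Nonempty := by
      obtain ⟨a, ha⟩ := Scal_ne hsplit hu hune
      exact ⟨a, Finset.mem_inter.mpr ⟨hxT.2.subset ha, hsy.subset ha⟩⟩
    rcases lam_Scal hcf hxT.1 hy hne with h | h
    · exact h
    · exact le_of_eq (Finset.eq_of_subset_of_card_le h hcard).symm
  exact ⟨x, ⟨hu, hune, hxT.1, hxT.2, hmin⟩, hmin w hw hsw⟩

lemma Brel_cover (hsplit : IsRowSplit M M' f) (hcf : ConflictFree M') :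
    ∀ k, ∀ w v : Finset (Fin m), (Scal M M' w \ Scal M M' v).card ≤ k → IsSupport M v →
      IsSupport M w → Scal M M' v ⊂ Scal M M' w → v.Nonempty → ∀ r ∈ v,
      ∃ u, Brel M M' u w ∧ r ∈ u := by
  intro k
  induction k with
  | zero =>
    intro w v hle hv hw hss _ r hr
    exfalso
    obtain ⟨a, haw, hav⟩ := Finset.exists_of_ssubset hss
    have h1 : a ∈ Scal M M' w \ Scal M M' v := Finset.mem_sdiff.mpr ⟨haw, hav⟩
    have := Finset.card_pos.mpr ⟨a, h1⟩
    omega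
  | succ k ih =>
    intro w v hle hv hw hss hvne r hr
    obtain ⟨x, hBvx, hxw⟩ := Brel_out hsplit hcf hv hvne hw hss
    obtain ⟨-, -, hxsupp, hvx, -⟩ := id hBvx
    by_cases hxw' : x = w
    · exact ⟨v, hxw' ▸ hBvx, hr⟩
    · have hsxw : Scal M M' x ⊂ Scal M M' w := by
        refine ⟨hxw, fun h => hxw' ?_⟩
        exact Scal_inj hsplit hxsupp hw (le_antisymm hxw h)
      have hrx : r ∈ x := Scal_mono hsplit hv hxsupp hvx.subset hr
      have hcard : (Scal M M' w \ Scal M M' x).card ≤ k := by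
        have hsub : Scal M M' w \ Scal M M' x ⊆ Scal M M' w \ Scal M M' v :=
          Finset.sdiff_subset_sdiff le_rfl hvx.subset
        obtain ⟨a, hax, hav⟩ := Finset.exists_of_ssubset hvx
        have halt : (Scal M M' w \ Scal M M' x).card < (Scal M M' w \ Scal M M' v).card := by
          refine Finset.card_lt_card ⟨hsub, fun hsub2 => ?_⟩
          have h1 : a ∈ Scal M M' w \ Scal M M' v :=
            Finset.mem_sdiff.mpr ⟨hxw hax, hav⟩
          exact (Finset.mem_sdiff.mp (hsub2 h1)).2 hax
        omega
      exact ih w x hcard hxsupp hw hsxw ⟨r, hrx⟩ r hrx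

lemma beta_le {m n : ℕ} (M : Fin m → Fin n → Bool) {m' : ℕ} (M' : Fin m' → Fin n → Bool)
    (f : Fin m' → Fin m) (hsplit : IsRowSplit M M' f) (hcf : ConflictFree M') :
    betaM M ≤ m' := by
  classical
  set U := UncovPairs M (Brel M M') with hUdef
  have hpick : ∀ p : ↥U, ∃ r', r' ∈ Scal M M' p.1.2 ∧ f r' = p.1.1 := by
    rintro ⟨⟨r, v⟩, hp⟩
    obtain ⟨hv, hrv, -⟩ := hp
    rw [Scal_img hsplit hv] at hrv
    obtain ⟨r', h1, h2⟩ := Finset.mem_image.mp hrv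
    exact ⟨r', h1, h2⟩
  choose g hg1 hg2 using hpick
  have hginj : Function.Injective g := by
    intro p q hpq
    have hr : p.1.1 = q.1.1 := by rw [← hg2 p, ← hg2 q, hpq]
    have hvw : p.1.2 = q.1.2 := by
      by_contra hne
      obtain ⟨hvsupp, hrv, huncp⟩ := p.2
      obtain ⟨hwsupp, hrw, huncq⟩ := q.2
      have hmem : g p ∈ Scal M M' p.1.2 ∩ Scal M M' q.1.2 :=
        Finset.mem_inter.mpr ⟨hg1 p, hpq ▸ hg1 q⟩
      have hSne : Scal M M' p.1.2 ≠ Scal M M' q.1.2 :=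
        fun h => hne (Scal_inj hsplit hvsupp hwsupp h)
      rcases lam_Scal hcf hvsupp hwsupp ⟨g p, hmem⟩ with h | h
      · have hss : Scal M M' p.1.2 ⊂ Scal M M' q.1.2 :=
          ⟨h, fun h' => hSne (le_antisymm h h')⟩
        obtain ⟨u, hu1, hu2⟩ := Brel_cover hsplit hcf _ _ _ le_rfl hvsupp hwsupp hss
          ⟨p.1.1, hrv⟩ p.1.1 hrv
        refine huncq u hu1 ?_
        rw [← hr]; exact hu2
      · have hss : Scal M M' q.1.2 ⊂ Scal M M' p.1.2 :=
          ⟨h, fun h' => hSne (le_antisymm h' h)⟩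
        obtain ⟨u, hu1, hu2⟩ := Brel_cover hsplit hcf _ _ _ le_rfl hwsupp hvsupp hss
          ⟨q.1.1, hrw⟩ q.1.1 hrw
        refine huncp u hu1 ?_
        rw [hr]; exact hu2
    exact Subtype.ext (Prod.ext hr hvw)
  have hUle : U.ncard ≤ m' := by
    have h1 : Nat.card ↥U ≤ Nat.card (Fin m') := Nat.card_le_card_of_injective g hginj
    rw [← Nat.card_coe_set_eq]
    simpa using h1
  exact le_trans (Nat.sInf_le ⟨Brel M M', Brel_branching hsplit, hUdef ▸ rfl⟩) hUle

end PartB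

/-- `γ(M) = β(M)`: the minimum number of rows of a conflict-free row split of `M` equals the
minimum number of uncovered pairs over all branchings of the containment digraph `D_M`. -/
theorem stmt_12 {m n : ℕ} (M : Fin m → Fin n → Bool)
    (hrow : ∀ r, ∃ j, M r j = true) :
    gammaM M = betaM M := by
  classical
  have hBempty : IsBranching M (fun _ _ => False) :=
    ⟨fun u v h => h.elim, fun u v w h _ => h.elim⟩
  have hgne : {k | ∃ (m' : ℕ) (M' : Fin m' → Fin n → Bool) (f : Fin m' → Fin m),
      IsRowSplit M M' f ∧ ConflictFree M' ∧ k = m'}.Nonempty :=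
    ⟨_, gamma_mem M hrow hBempty⟩
  have hbne : {k | ∃ B, IsBranching M B ∧ (UncovPairs M B).ncard = k}.Nonempty :=
    ⟨_, _, hBempty, rfl⟩
  refine le_antisymm ?_ ?_
  · obtain ⟨B, hB, hcard⟩ := Nat.sInf_mem hbne
    calc gammaM M ≤ (UncovPairs M B).ncard := Nat.sInf_le (gamma_mem M hrow hB)
      _ = betaM M := hcard
  · obtain ⟨m', M', f, hs, hcf, hk⟩ := Nat.sInf_mem hgne
    calc betaM M ≤ m' := beta_le M M' f hs hcf
      _ = gammaM M := hk.symm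
end

section
/- Let M be a binary matrix (no all-zero row, no duplicated columns) with containment digraph D_M of height h (maximum number of vertices on a directed path in D_M). Then for every branching B of D_M, |U(B)| ≤ h · β(M), where β(M) is the minimum of |U(B')| over all branchings B' of D_M. In particular, the empty branching satisfies |U(∅)| ≤ h · β(M). -/
/-!
Fix a branching `B` attaining `β(M)`. From a pair `(r, v)` with `r ∈ v`, repeatedly step down
along an arc of `B` from an in-neighbour that still contains `r`; this stops at a `B`-uncovered
pair `(r, w)` after `k` steps. The visited vertices form a chain in `D_M`, so `k < h`, and since
every vertex has at most one outgoing arc in `B`, `v` is reached back from `w` by following `k`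
outgoing arcs. So `U(∅)` is covered by the image of `U(B) × {0, …, h - 1}`, whence
`|U(∅)| ≤ h · β(M)`; and `U(B') ⊆ U(∅)` for every `B'`.
-/

open Classical in
noncomputable def outNbr {γ : Type*} (B : γ → γ → Prop) (v : γ) : γ :=
  if h : ∃ w, B v w then h.choose else v

lemma outNbr_eq_of_rel {γ : Type*} {B : γ → γ → Prop}
    (huniq : ∀ u v w, B u v → B u w → v = w) {v w : γ} (hvw : B v w) : outNbr B v = w := by
  have he : ∃ w, B v w := ⟨w, hvw⟩
  rw [outNbr, dif_pos he]
  exact huniq v _ _ he.choose_spec hvw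

section Branching

variable {α β : Type*} [Fintype α] [DecidableEq α] {M : α → β → Bool}
  {B : Finset α → Finset α → Prop}

lemma IsBranching.isSupport_iterate_outNbr (hB : IsBranching M B) {v : Finset α}
    (hv : IsSupport M v) (k : ℕ) : IsSupport M ((outNbr B)^[k] v) := by
  induction k with
  | zero => exact hv
  | succ k ih =>
    rw [Function.iterate_succ_apply']
    by_cases hout : ∃ w, B ((outNbr B)^[k] v) w
    · obtain ⟨w, hw⟩ := hout
      rw [outNbr_eq_of_rel hB.2 hw]
      exact (hB.1 _ _ hw).2.1
    · rwa [outNbr, dif_neg hout]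

lemma IsBranching.exists_mem_uncovPairs_iterate_outNbr_eq (hB : IsBranching M B) {r : α}
    {v : Finset α} (hv : IsSupport M v) (hr : r ∈ v) :
    ∃ w k, (r, w) ∈ UncovPairs M B ∧ (outNbr B)^[k] w = v ∧
      ∀ i < k, (outNbr B)^[i] w ⊂ (outNbr B)^[i + 1] w := by
  induction v using Finset.strongInduction with
  | H v ih =>
    by_cases hunc : ∀ u, B u v → r ∉ u
    · exact ⟨v, 0, ⟨hv, hr, hunc⟩, rfl, fun i hi => absurd hi i.not_lt_zero⟩
    push Not at hunc
    obtain ⟨u, huv, hru⟩ := hunc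
    obtain ⟨hu, -, hsub⟩ := hB.1 u v huv
    obtain ⟨w, k, hw, hwk, hchain⟩ := ih u hsub hu hru
    have hstep : (outNbr B)^[k + 1] w = v := by
      rw [Function.iterate_succ_apply', hwk, outNbr_eq_of_rel hB.2 huv]
    refine ⟨w, k + 1, hw, hstep, fun i hi => ?_⟩
    rcases Nat.lt_succ_iff_lt_or_eq.mp hi with hi | rfl
    · exact hchain i hi
    · rwa [hstep, hwk]

end Branching

lemma add_one_le_of_chain {α β : Type*} [Fintype α] [DecidableEq α] {M : α → β → Bool} {h : ℕ}
    (hmax : ∀ l : List (Finset α), (∀ v ∈ l, IsSupport M v) → l.IsChain (· ⊂ ·) → l.length ≤ h)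
    {f : ℕ → Finset α} {k : ℕ} (hsupp : ∀ i, IsSupport M (f i))
    (hchain : ∀ i < k, f i ⊂ f (i + 1)) : k + 1 ≤ h := by
  have hlist : ((List.range (k + 1)).map f).IsChain (· ⊂ ·) := by
    rw [List.isChain_map, List.isChain_range_succ]
    exact hchain
  simpa using hmax _ (by simp [hsupp]) hlist

lemma uncovPairs_subset_uncovPairs_bot {α β : Type*} [Fintype α] [DecidableEq α]
    (M : α → β → Bool) (B : Finset α → Finset α → Prop) :
    UncovPairs M B ⊆ UncovPairs M (fun _ _ => False) :=
  fun _ hp => ⟨hp.1, hp.2.1, fun _ hf => hf.elim⟩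

lemma exists_isBranching_ncard_uncovPairs_eq_betaM {α β : Type*} [Fintype α] [DecidableEq α]
    (M : α → β → Bool) : ∃ B, IsBranching M B ∧ (UncovPairs M B).ncard = betaM M :=
  Nat.sInf_mem (s := {k | ∃ B, IsBranching M B ∧ (UncovPairs M B).ncard = k})
    ⟨_, fun _ _ => False, ⟨fun _ _ hf => hf.elim, fun _ _ _ hf _ => hf.elim⟩, rfl⟩

lemma ncard_uncovPairs_bot_le {α β : Type*} [Fintype α] [DecidableEq α] {M : α → β → Bool}
    {B : Finset α → Finset α → Prop} (hB : IsBranching M B) {h : ℕ}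
    (hmax : ∀ l : List (Finset α), (∀ v ∈ l, IsSupport M v) → l.IsChain (· ⊂ ·) → l.length ≤ h) :
    (UncovPairs M (fun _ _ => False)).ncard ≤ h * (UncovPairs M B).ncard := by
  have hcover : UncovPairs M (fun _ _ => False) ⊆
      (fun x => (x.1.1, (outNbr B)^[x.2] x.1.2)) '' (UncovPairs M B ×ˢ Set.Iio h) := by
    rintro ⟨r, v⟩ ⟨hv, hr, -⟩
    obtain ⟨w, k, hw, hwk, hchain⟩ := hB.exists_mem_uncovPairs_iterate_outNbr_eq hv hr
    have hk : k < h := add_one_le_of_chain hmax (hB.isSupport_iterate_outNbr hw.1) hchain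
    exact ⟨((r, w), k), ⟨hw, hk⟩, congrArg (Prod.mk r) hwk⟩
  calc (UncovPairs M (fun _ _ => False)).ncard
      ≤ ((fun x => (x.1.1, (outNbr B)^[x.2] x.1.2)) '' (UncovPairs M B ×ˢ Set.Iio h)).ncard :=
        Set.ncard_le_ncard hcover
    _ ≤ (UncovPairs M B ×ˢ Set.Iio h).ncard := Set.ncard_image_le
    _ = h * (UncovPairs M B).ncard := by rw [Set.ncard_prod, Set.ncard_Iio_nat, mul_comm]

theorem stmt_16_general {m n : ℕ} (M : Fin m → Fin n → Bool)
    (h : ℕ)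
    (hmax : ∀ l : List (Finset (Fin m)), (∀ v ∈ l, IsSupport M v) →
      l.Chain' (· ⊂ ·) → l.length ≤ h)
    (B : Finset (Fin m) → Finset (Fin m) → Prop) :
    (UncovPairs M B).ncard ≤ h * betaM M ∧
    (UncovPairs M (fun _ _ => False)).ncard ≤ h * betaM M := by
  obtain ⟨B₀, hB₀, hB₀β⟩ := exists_isBranching_ncard_uncovPairs_eq_betaM M
  have hbot : (UncovPairs M (fun _ _ => False)).ncard ≤ h * betaM M :=
    hB₀β ▸ ncard_uncovPairs_bot_le hB₀ hmax
  exact ⟨(Set.ncard_le_ncard (uncovPairs_subset_uncovPairs_bot M B)).trans hbot, hbot⟩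

/-- If the containment digraph of `M` has height `h` (maximum number of vertices on a
directed path), then every branching `B` of `D_M` satisfies `|U(B)| ≤ h · β(M)`; in
particular this holds for the empty branching. -/
theorem stmt_16 {m n : ℕ} (M : Fin m → Fin n → Bool)
    (hrow : ∀ r, ∃ j, M r j = true)
    (hdist : ∀ j j' : Fin n, Supp M j = Supp M j' → j = j')
    (h : ℕ)
    (hmax : ∀ l : List (Finset (Fin m)), (∀ v ∈ l, IsSupport M v) →
      l.Chain' (· ⊂ ·) → l.length ≤ h)
    (hex : ∃ l : List (Finset (Fin m)), (∀ v ∈ l, IsSupport M v) ∧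
      l.Chain' (· ⊂ ·) ∧ l.length = h)
    (B : Finset (Fin m) → Finset (Fin m) → Prop) (hB : IsBranching M B) :
    (UncovPairs M B).ncard ≤ h * betaM M ∧
    (UncovPairs M (fun _ _ => False)).ncard ≤ h * betaM M :=
  stmt_16_general M h hmax B
end

section
/- Let M be a binary matrix (no all-zero row, no duplicated columns) and let B be a linear branching of D_M corresponding to a chain partition P = {C_1, ..., C_w} of D_M into w = wdt(M) chains. Then |U(B)| ≤ w · m ≤ w · γ(M), where m is the number of rows of M and γ(M) is the minimum number of rows of a conflict-free row split of M. More precisely, for each row r of M, the number of vertices v ∈ C_i with (r,v) ∈ U(B) is at most 1 for each chain C_i. -/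
/-- For a linear branching `B` of `D_M` arising from a chain partition `P` into
`w = wdt(M)` chains: each chain contains at most one vertex `v` with `(r,v)` uncovered
(for each row `r`), and consequently `|U(B)| ≤ w · m ≤ w · γ(M)`. -/
theorem stmt_17 {m n : ℕ} (M : Fin m → Fin n → Bool)
    (hrow : ∀ r, ∃ j, M r j = true)
    (hcol : ∀ j, ∃ r, M r j = true)
    (w : ℕ)
    -- `w` is the width of `D_M`: the maximum size of an antichain of supports
    (hw_ex : ∃ N : Finset (Finset (Fin m)), (∀ v ∈ N, IsSupport M v) ∧
      (∀ u ∈ N, ∀ v ∈ N, u ≠ v → ¬ u ⊆ v) ∧ N.card = w)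
    (hw_max : ∀ N : Finset (Finset (Fin m)), (∀ v ∈ N, IsSupport M v) →
      (∀ u ∈ N, ∀ v ∈ N, u ≠ v → ¬ u ⊆ v) → N.card ≤ w)
    -- `P` is a chain partition of the vertices of `D_M` into `w` chains
    (P : Finset (Finset (Finset (Fin m))))
    (hPcard : P.card = w)
    (hPchain : ∀ C ∈ P, ∀ u ∈ C, ∀ v ∈ C, u ⊆ v ∨ v ⊆ u)
    (hPsupp : ∀ C ∈ P, ∀ v ∈ C, IsSupport M v)
    (hPdisj : (P : Set (Finset (Finset (Fin m)))).PairwiseDisjoint id)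
    (hPcover : ∀ v : Finset (Fin m), IsSupport M v → ∃ C ∈ P, v ∈ C)
    -- `B` is the corresponding linear branching: arcs to immediate successors in chains
    (B : Finset (Fin m) → Finset (Fin m) → Prop)
    (hB : ∀ u v, B u v ↔ ∃ C ∈ P, u ∈ C ∧ v ∈ C ∧ u ⊂ v ∧ ¬ ∃ x ∈ C, u ⊂ x ∧ x ⊂ v) :
    (∀ r : Fin m, ∀ C ∈ P, {v | v ∈ C ∧ (r, v) ∈ UncovPairs M B}.ncard ≤ 1) ∧
    (UncovPairs M B).ncard ≤ w * m ∧ w * m ≤ w * gammaM M := by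
  classical
  -- Key: within a chain, at most one uncovered vertex per row.
  have key : ∀ (r : Fin m), ∀ C ∈ P,
      ∀ v₁ ∈ {v | v ∈ C ∧ (r, v) ∈ UncovPairs M B},
      ∀ v₂ ∈ {v | v ∈ C ∧ (r, v) ∈ UncovPairs M B}, v₁ = v₂ := by
    intro r C hC
    have main : ∀ v₁ v₂, (v₁ ∈ C ∧ (r, v₁) ∈ UncovPairs M B) →
        (v₂ ∈ C ∧ (r, v₂) ∈ UncovPairs M B) → v₁ ⊂ v₂ → False := by
      intro v₁ v₂ h1 h2 hss
      have hr1 : r ∈ v₁ := h1.2.2.1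
      have huncov : ∀ u, B u v₂ → r ∉ u := h2.2.2.2
      set T := C.filter (fun x => x ⊂ v₂) with hT
      have hv1T : v₁ ∈ T := Finset.mem_filter.2 ⟨h1.1, hss⟩
      obtain ⟨u, huT, humax⟩ := T.exists_max_image Finset.card ⟨v₁, hv1T⟩
      have huC : u ∈ C := (Finset.mem_filter.1 huT).1
      have huv2 : u ⊂ v₂ := (Finset.mem_filter.1 huT).2
      have hBu : B u v₂ := by
        rw [hB]
        refine ⟨C, hC, huC, h2.1, huv2, ?_⟩
        rintro ⟨x, hxC, hux, hxv2⟩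
        have hxT : x ∈ T := Finset.mem_filter.2 ⟨hxC, hxv2⟩
        exact absurd (humax x hxT) (not_le.2 (Finset.card_lt_card hux))
      have hru : r ∈ u := by
        rcases hPchain C hC v₁ h1.1 u huC with h | h
        · exact h hr1
        · have heq : u = v₁ := Finset.eq_of_subset_of_card_le h (humax v₁ hv1T)
          exact heq ▸ hr1
      exact huncov u hBu hru
    intro v₁ h1 v₂ h2
    simp only [Set.mem_setOf_eq] at h1 h2
    rcases eq_or_ne v₁ v₂ with he | hne
    · exact he
    · rcases hPchain C hC v₁ h1.1 v₂ h2.1 with h | h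
      · exact absurd (main v₁ v₂ h1 h2 (h.ssubset_of_ne hne)) id
      · exact absurd (main v₂ v₁ h2 h1 (h.ssubset_of_ne hne.symm)) id
  -- choice of chain containing a support
  have hch : ∀ v : Finset (Fin m), IsSupport M v →
      (if h : IsSupport M v then (hPcover v h).choose else ∅) ∈ P ∧
      v ∈ (if h : IsSupport M v then (hPcover v h).choose else ∅) := by
    intro v h
    rw [dif_pos h]
    exact (hPcover v h).choose_spec
  refine ⟨?_, ?_, ?_⟩
  · intro r C hC
    rw [Set.ncard_le_one]
    exact key r C hC
  · -- count uncovered pairs by injecting into rows × chains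
    have hinj := Set.ncard_le_ncard_of_injOn
      (s := UncovPairs M B)
      (t := ↑((Finset.univ : Finset (Fin m)) ×ˢ P))
      (fun p => (p.1, if h : IsSupport M p.2 then (hPcover p.2 h).choose else ∅))
      (by
        intro p hp
        simp only [Finset.coe_product, Set.mem_prod, Finset.mem_coe]
        exact ⟨Finset.mem_univ _, (hch p.2 hp.1).1⟩)
      (by
        intro p hp q hq hpq
        simp only [Prod.mk.injEq] at hpq
        obtain ⟨h1, h2⟩ := hpq
        obtain ⟨hCp, hvp⟩ := hch p.2 hp.1
        obtain ⟨hCq, hvq⟩ := hch q.2 hq.1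
        rw [h2] at hCp hvp
        have : p.2 = q.2 := by
          refine key p.1 (if h : IsSupport M q.2 then (hPcover q.2 h).choose else ∅)
            hCq p.2 ⟨hvp, ?_⟩ q.2 ⟨hvq, ?_⟩
          · exact hp
          · rw [h1]; exact hq
        exact Prod.ext h1 this)
      (Set.toFinite _)
    calc (UncovPairs M B).ncard
        ≤ (↑((Finset.univ : Finset (Fin m)) ×ˢ P) :
            Set (Fin m × Finset (Finset (Fin m)))).ncard := hinj
      _ = ((Finset.univ : Finset (Fin m)) ×ˢ P).card := Set.ncard_coe_finset _
      _ = m * w := by rw [Finset.card_product, Finset.card_univ, Fintype.card_fin, hPcard]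
      _ = w * m := Nat.mul_comm m w
  · -- m ≤ gammaM M
    refine Nat.mul_le_mul_left w ?_
    apply le_csInf
    · -- the set of split sizes is nonempty: split each row into unit rows
      set s := {p : Fin m × Fin n // M p.1 p.2 = true} with hs
      let e := (Fintype.equivFin s).symm
      refine ⟨Fintype.card s, Fintype.card s,
        (fun r j => decide (j = (e r).1.2)), (fun r => (e r).1.1), ⟨?_, ?_⟩, ?_, rfl⟩
      · intro i
        obtain ⟨j, hj⟩ := hrow i
        refine ⟨e.symm ⟨(i, j), hj⟩, ?_⟩
        show (e (e.symm ⟨(i, j), hj⟩)).1.1 = i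
        rw [Equiv.apply_symm_apply]
      · intro i j
        constructor
        · intro hij
          refine ⟨e.symm ⟨(i, j), hij⟩, ?_, ?_⟩
          · show (e (e.symm ⟨(i, j), hij⟩)).1.1 = i
            rw [Equiv.apply_symm_apply]
          · show decide (j = (e (e.symm ⟨(i, j), hij⟩)).1.2) = true
            rw [Equiv.apply_symm_apply]
            exact decide_eq_true rfl
        · rintro ⟨r', rfl, hM'⟩
          have hj : j = (e r').1.2 := of_decide_eq_true hM'
          rw [hj]
          exact (e r').2
      · rintro i j ⟨r, r', r'', h1, h2, h3, h4, h5, h6⟩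
        have hi : i = (e r).1.2 := of_decide_eq_true h1
        have hj : j = (e r).1.2 := of_decide_eq_true h2
        rw [hi, ← hj] at h3
        rw [h3] at h4
        simp at h4
    · rintro k ⟨m', M', f, ⟨hsurj, -⟩, -, rfl⟩
      have := Fintype.card_le_of_surjective f hsurj
      simpa using this
end

section
/- There exist a finite DAG D and a non-monotone weight function π : V(D) → ℕ for which the minimum price of a chain partition strictly exceeds the maximum value of a tower of antichains. Concretely, let D have vertices a, b, ab, bc (interpreted as the sets {a}, {b}, {a,b}, {b,c}) with arcs given by proper set inclusion ({a} → {a,b}, {b} → {a,b}, {b} → {b,c}), and let π({a}) = π({b,c}) = z, π({b}) = π({a,b}) = Z where 0 < z < Z < 2z. Then the minimum price of a chain partition of D is 2Z, whereas the maximum value of a tower of antichains of D is Z + z, and 2Z > Z + z. -/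
-- Vertices `0, 1, 2, 3` stand for the sets `{a}, {b}, {a,b}, {b,c}`; arcs by proper inclusion.
def exArc : Fin 4 → Fin 4 → Prop := fun u v =>
  (u = 0 ∧ v = 2) ∨ (u = 1 ∧ v = 2) ∨ (u = 1 ∧ v = 3)

theorem Finset.sum_le_sum_sup_of_injOn {α M : Type*} [AddCommMonoid M] [LinearOrder M]
    [OrderBot M] [IsOrderedAddMonoid M] [CanonicallyOrderedAdd M]
    (P : Finset (Finset α)) (π : α → M) (S : Finset α) (f : α → Finset α)
    (hf : ∀ v ∈ S, f v ∈ P ∧ v ∈ f v) (hinj : Set.InjOn f S) :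
    ∑ v ∈ S, π v ≤ ∑ C ∈ P, C.sup π := by
  classical
  calc ∑ v ∈ S, π v ≤ ∑ v ∈ S, (f v).sup π :=
        Finset.sum_le_sum fun v hv => Finset.le_sup (hf v hv).2
    _ = ∑ C ∈ S.image f, C.sup π := (Finset.sum_image hinj).symm
    _ ≤ ∑ C ∈ P, C.sup π :=
        Finset.sum_le_sum_of_subset (Finset.image_subset_iff.mpr fun v hv => (hf v hv).1)

instance : DecidableRel exArc := fun u v => by unfold exArc; infer_instance

-- Vacuously: no arc ends where another one starts.
instance : IsTrans (Fin 4) exArc := ⟨by decide⟩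

theorem transGen_exArc : Relation.TransGen exArc = exArc := Relation.transGen_eq_self

instance : DecidablePred (IsAntichainD exArc) := fun N =>
  decidable_of_iff (∀ u ∈ N, ∀ v ∈ N, u ≠ v → ¬ exArc u v) (by rw [IsAntichainD, transGen_exArc])

instance : DecidablePred (IsChainD exArc) := fun C =>
  decidable_of_iff (∀ u ∈ C, ∀ v ∈ C, u ≠ v → exArc u v ∨ exArc v u)
    (by rw [IsChainD, transGen_exArc])

theorem IsChainD.ne_of_not_transGen {V : Type*} {A : V → V → Prop} {C D : Finset V}
    (hC : IsChainD A C) {u v : V} (hu : u ∈ C) (hv : v ∈ D) (huv : u ≠ v)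
    (hnuv : ¬ Relation.TransGen A u v) (hnvu : ¬ Relation.TransGen A v u) : C ≠ D := by
  rintro rfl
  exact (hC u hu v hv huv).elim hnuv hnvu

theorem exists_mem_of_biUnion_eq_univ {α : Type*} [Fintype α] [DecidableEq α]
    {P : Finset (Finset α)} (hcover : P.biUnion id = Finset.univ) (v : α) : ∃ C ∈ P, v ∈ C := by
  simpa using (Finset.ext_iff.mp hcover v).mpr (Finset.mem_univ v)

theorem two_mul_le_price_exArc (z Z : ℕ) (hZ2 : Z < 2 * z) (P : Finset (Finset (Fin 4)))
    (hchain : ∀ C ∈ P, IsChainD exArc C) (hcover : P.biUnion id = Finset.univ) :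
    2 * Z ≤ ∑ C ∈ P, C.sup ![z, Z, Z, z] := by
  choose f hfP hvf using exists_mem_of_biUnion_eq_univ hcover
  have hne : ∀ u v : Fin 4, u ≠ v → ¬ exArc u v → ¬ exArc v u → f u ≠ f v :=
    fun u v huv hnuv hnvu => (hchain _ (hfP u)).ne_of_not_transGen (hvf u) (hvf v) huv
      (by rwa [transGen_exArc]) (by rwa [transGen_exArc])
  have hle : ∀ S : Finset (Fin 4), Set.InjOn f S →
      ∑ v ∈ S, ![z, Z, Z, z] v ≤ ∑ C ∈ P, C.sup ![z, Z, Z, z] :=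
    fun S => Finset.sum_le_sum_sup_of_injOn P _ S f fun v _ => ⟨hfP v, hvf v⟩
  by_cases h12 : f 1 = f 2
  · have h01 := hne 0 1 (by decide) (by decide) (by decide)
    have h03 := hne 0 3 (by decide) (by decide) (by decide)
    have h13 : f 1 ≠ f 3 := h12 ▸ hne 2 3 (by decide) (by decide) (by decide)
    have hinj : Set.InjOn f ({0, 1, 3} : Finset (Fin 4)) := by
      simp [Set.injOn_iff_pairwise_ne, Set.pairwise_insert, h01, h03, h13, h01.symm, h03.symm,
        h13.symm]
    calc 2 * Z ≤ z + Z + z := by omega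
      _ = ∑ v ∈ {0, 1, 3}, ![z, Z, Z, z] v := by simp [add_assoc]
      _ ≤ _ := hle _ hinj
  · calc 2 * Z = ∑ v ∈ {1, 2}, ![z, Z, Z, z] v := by simp [two_mul]
      _ ≤ _ := hle _ (by simpa [Set.InjOn] using ⟨h12, Ne.symm h12⟩)

theorem zero_mem_or_three_mem_of_isAntichainD_exArc :
    ∀ N : Finset (Fin 4), IsAntichainD exArc N → N.card = 2 → 0 ∈ N ∨ 3 ∈ N := by
  decide

theorem tower_value_le_exArc (z Z : ℕ) (hzZ : z ≤ Z) (N : Fin 2 → Finset (Fin 4))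
    (hanti : ∀ i, IsAntichainD exArc (N i)) (hcard : ∀ i : Fin 2, (N i).card = (i : ℕ) + 1) :
    ∑ i : Fin 2, sInf (![z, Z, Z, z] '' (N i : Set (Fin 4))) ≤ Z + z := by
  set π : Fin 4 → ℕ := ![z, Z, Z, z]
  obtain ⟨v, hv⟩ := Finset.card_eq_one.mp (hcard 0)
  have h0 : sInf (π '' (N 0 : Set (Fin 4))) ≤ Z :=
    calc sInf (π '' (N 0 : Set (Fin 4))) ≤ π v := Nat.sInf_le ⟨v, by simp [hv], rfl⟩
      _ ≤ Z := by fin_cases v <;> simp [π, hzZ]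
  have h1 : sInf (π '' (N 1 : Set (Fin 4))) ≤ z := by
    rcases zero_mem_or_three_mem_of_isAntichainD_exArc (N 1) (hanti 1) (hcard 1) with h | h
    · exact Nat.sInf_le ⟨0, h, rfl⟩
    · exact Nat.sInf_le ⟨3, h, rfl⟩
  rw [Fin.sum_univ_two]
  omega

theorem stmt_18_general (z Z : ℕ) (hzZ : z < Z) (hZ2 : Z < 2 * z) :
    let π : Fin 4 → ℕ := ![z, Z, Z, z]
    -- the width of the DAG is 2
    ((∀ N : Finset (Fin 4), IsAntichainD exArc N → N.card ≤ 2) ∧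
     (∃ N : Finset (Fin 4), IsAntichainD exArc N ∧ N.card = 2)) ∧
    -- the minimum price of a chain partition is 2Z
    ((∀ P : Finset (Finset (Fin 4)), (∀ C ∈ P, IsChainD exArc C) → (∀ C ∈ P, C.Nonempty) →
        (P : Set (Finset (Fin 4))).PairwiseDisjoint id → P.biUnion id = Finset.univ →
        2 * Z ≤ ∑ C ∈ P, C.sup π) ∧
     (∃ P : Finset (Finset (Fin 4)), (∀ C ∈ P, IsChainD exArc C) ∧ (∀ C ∈ P, C.Nonempty) ∧
        (P : Set (Finset (Fin 4))).PairwiseDisjoint id ∧ P.biUnion id = Finset.univ ∧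
        (∑ C ∈ P, C.sup π) = 2 * Z)) ∧
    -- the maximum value of a tower of antichains is Z + z
    ((∀ N : Fin 2 → Finset (Fin 4), (∀ i, IsAntichainD exArc (N i)) →
        (∀ i : Fin 2, (N i).card = (i : ℕ) + 1) →
        (∑ i : Fin 2, sInf (π '' (N i : Set (Fin 4)))) ≤ Z + z) ∧
     (∃ N : Fin 2 → Finset (Fin 4), (∀ i, IsAntichainD exArc (N i)) ∧
        (∀ i : Fin 2, (N i).card = (i : ℕ) + 1) ∧
        (∑ i : Fin 2, sInf (π '' (N i : Set (Fin 4)))) = Z + z)) ∧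
    Z + z < 2 * Z := by
  intro π
  refine ⟨⟨by decide, ⟨{0, 1}, by decide, rfl⟩⟩, ⟨fun P hchain _ _ hcover =>
    two_mul_le_price_exArc z Z hZ2 P hchain hcover, ⟨{{0, 2}, {1, 3}}, by decide, by decide,
      ?_, by decide, ?_⟩⟩, ⟨tower_value_le_exArc z Z hzZ.le, ⟨![{1}, {0, 1}], by decide,
      by decide, ?_⟩⟩, by omega⟩
  · rw [Finset.coe_pair, Set.PairwiseDisjoint, Set.pairwise_pair_of_symm]
    decide
  · simp [π, Finset.sum_pair (show ({0, 2} : Finset (Fin 4)) ≠ {1, 3} by decide), hzZ.le, two_mul]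
  · simp [π, Fin.sum_univ_two, Set.image_insert_eq, hzZ.le]

/-- The monotonicity assumption cannot be dropped: for this DAG and non-monotone weights,
the minimum price of a chain partition is `2Z`, while the maximum value of a tower of
antichains is `Z + z`, and `Z + z < 2Z`. -/
theorem stmt_18 (z Z : ℕ) (hz : 0 < z) (hzZ : z < Z) (hZ2 : Z < 2 * z) :
    let π : Fin 4 → ℕ := ![z, Z, Z, z]
    -- the width of the DAG is 2
    ((∀ N : Finset (Fin 4), IsAntichainD exArc N → N.card ≤ 2) ∧
     (∃ N : Finset (Fin 4), IsAntichainD exArc N ∧ N.card = 2)) ∧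
    -- the minimum price of a chain partition is 2Z
    ((∀ P : Finset (Finset (Fin 4)), (∀ C ∈ P, IsChainD exArc C) → (∀ C ∈ P, C.Nonempty) →
        (P : Set (Finset (Fin 4))).PairwiseDisjoint id → P.biUnion id = Finset.univ →
        2 * Z ≤ ∑ C ∈ P, C.sup π) ∧
     (∃ P : Finset (Finset (Fin 4)), (∀ C ∈ P, IsChainD exArc C) ∧ (∀ C ∈ P, C.Nonempty) ∧
        (P : Set (Finset (Fin 4))).PairwiseDisjoint id ∧ P.biUnion id = Finset.univ ∧
        (∑ C ∈ P, C.sup π) = 2 * Z)) ∧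
    -- the maximum value of a tower of antichains is Z + z
    ((∀ N : Fin 2 → Finset (Fin 4), (∀ i, IsAntichainD exArc (N i)) →
        (∀ i : Fin 2, (N i).card = (i : ℕ) + 1) →
        (∑ i : Fin 2, sInf (π '' (N i : Set (Fin 4)))) ≤ Z + z) ∧
     (∃ N : Fin 2 → Finset (Fin 4), (∀ i, IsAntichainD exArc (N i)) ∧
        (∀ i : Fin 2, (N i).card = (i : ℕ) + 1) ∧
        (∑ i : Fin 2, sInf (π '' (N i : Set (Fin 4)))) = Z + z)) ∧
    Z + z < 2 * Z :=
  stmt_18_general z Z hzZ hZ2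
end

section
/- Let G be a cubic graph (every vertex has degree exactly 3). Let M be a binary matrix without duplicated columns whose column hypergraph is isomorphic to the hypergraph with vertex set E(G) and hyperedge set E(G) ∪ {E(v) : v ∈ V(G)}, where E(v) denotes the set of edges incident with v (here each single edge e ∈ E(G) is also a hyperedge {e}). Then ζ(M) = |E(G)| + τ(G), where ζ(M) is the minimum over branchings B of the containment digraph D_M of the number of B-irreducible vertices, and τ(G) is the vertex cover number of G. -/
section
variable {V : Type*} [Fintype V] [DecidableEq V] (G : SimpleGraph V) [DecidableRel G.Adj]

def estar (v : V) : Finset ↥G.edgeFinset :=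
  Finset.univ.filter (fun e : ↥G.edgeFinset => v ∈ (e : Sym2 V))

lemma mem_estar {v : V} {e : ↥G.edgeFinset} : e ∈ estar G v ↔ v ∈ (e : Sym2 V) := by
  simp [estar]

lemma estar_card (hcubic : ∀ v : V, G.degree v = 3) (v : V) : (estar G v).card = 3 := by
  rw [← hcubic v, ← G.card_incidenceFinset_eq_degree v]
  refine Finset.card_bij (fun e _ => (e : Sym2 V)) ?_ ?_ ?_
  · intro e he
    rw [SimpleGraph.mem_incidenceFinset]
    exact ⟨SimpleGraph.mem_edgeFinset.1 e.2, (mem_estar G).1 he⟩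
  · intro a _ b _ h; exact Subtype.ext h
  · intro e he
    rw [SimpleGraph.mem_incidenceFinset] at he
    exact ⟨⟨e, SimpleGraph.mem_edgeFinset.2 he.1⟩, (mem_estar G).2 he.2, rfl⟩

lemma estar_inj (hcubic : ∀ v : V, G.degree v = 3) : Function.Injective (estar G) := by
  intro a b h
  by_contra hne
  have h1 : (estar G a).card ≤ 1 := by
    apply Finset.card_le_one.2
    intro e he e' he'
    have ha : a ∈ (e : Sym2 V) := (mem_estar G).1 he
    have hb : b ∈ (e : Sym2 V) := (mem_estar G).1 (h ▸ he)
    have ha' : a ∈ (e' : Sym2 V) := (mem_estar G).1 he'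
    have hb' : b ∈ (e' : Sym2 V) := (mem_estar G).1 (h ▸ he')
    have h2 := (Sym2.mem_and_mem_iff hne).1 ⟨ha, hb⟩
    have h3 := (Sym2.mem_and_mem_iff hne).1 ⟨ha', hb'⟩
    exact Subtype.ext (h2.trans h3.symm)
  rw [estar_card G hcubic] at h1
  omega


lemma estar_nonempty (hcubic : ∀ v : V, G.degree v = 3) (v : V) : (estar G v).Nonempty := by
  rw [← Finset.card_pos, estar_card G hcubic]; omega

lemma singleton_ssubset_estar (hcubic : ∀ v : V, G.degree v = 3) {v : V} {e : ↥G.edgeFinset}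
    (he : e ∈ estar G v) : ({e} : Finset ↥G.edgeFinset) ⊂ estar G v := by
  refine (Finset.ssubset_iff_of_subset (Finset.singleton_subset_iff.2 he)).2 ?_
  by_contra h
  push_neg at h
  have hsub : estar G v ⊆ {e} := fun x hx => h x hx
  have := Finset.card_le_card hsub
  rw [estar_card G hcubic] at this
  simp at this

end

/-- For a cubic graph `G` and a binary matrix `M` with row set `E(G)`, pairwise distinct
columns, and column supports exactly the singletons `{e}` (`e ∈ E(G)`) together with the
sets `E(v)` of edges incident with `v` (`v ∈ V(G)`), one has `ζ(M) = |E(G)| + τ(G)`. -/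
theorem stmt_19 {V : Type*} [Fintype V] [DecidableEq V] (G : SimpleGraph V)
    [DecidableRel G.Adj]
    (hcubic : ∀ v : V, G.degree v = 3)
    {n : ℕ} (M : ↥G.edgeFinset → Fin n → Bool)
    (hdist : ∀ j j' : Fin n, (fun r => M r j) = (fun r => M r j') → j = j')
    (hsupp : ∀ w : Finset ↥G.edgeFinset, IsSupport M w ↔
      ((∃ e : ↥G.edgeFinset, w = {e}) ∨
       (∃ v : V, w = Finset.univ.filter (fun e : ↥G.edgeFinset => v ∈ (e : Sym2 V))))) :
    zetaM M = G.edgeFinset.card +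
      sInf {k | ∃ C : Finset V, (∀ e ∈ G.edgeFinset, ∃ v ∈ C, v ∈ e) ∧ C.card = k} := by

  classical
  set τS := {k | ∃ C : Finset V, (∀ e ∈ G.edgeFinset, ∃ v ∈ C, v ∈ e) ∧ C.card = k} with hτS
  have hτS_ne : τS.Nonempty := by
    refine ⟨(Finset.univ : Finset V).card, Finset.univ, fun e _ => ?_, rfl⟩
    exact ⟨e.out.1, Finset.mem_univ _, Sym2.out_fst_mem e⟩
  set τ := sInf τS with hτ
  obtain ⟨C, hC, hCcard⟩ := Nat.sInf_mem hτS_ne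
  have hsupp_star : ∀ v : V, IsSupport M (estar G v) := fun v => (hsupp _).2 (Or.inr ⟨v, rfl⟩)
  have hsupp_single : ∀ e : ↥G.edgeFinset, IsSupport M {e} := fun e => (hsupp _).2 (Or.inl ⟨e, rfl⟩)
  have hsupp' : ∀ w : Finset ↥G.edgeFinset, IsSupport M w ↔
      ((∃ e : ↥G.edgeFinset, w = {e}) ∨ (∃ v : V, w = estar G v)) := hsupp
  have hempty : ¬ IsSupport M (∅ : Finset ↥G.edgeFinset) := by
    intro h
    rcases (hsupp' ∅).1 h with ⟨e, he⟩ | ⟨v, hv⟩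
    · exact (Finset.singleton_ne_empty e) he.symm
    · exact (estar_nonempty G hcubic v).ne_empty hv.symm
  set B₀ : Finset ↥G.edgeFinset → Finset ↥G.edgeFinset → Prop :=
    fun u w => ∃ (e : ↥G.edgeFinset) (v : V),
      u = {e} ∧ w = estar G v ∧ v ∈ (e : Sym2 V) ∧ v ∉ C with hB₀
  have hbr₀ : IsBranching M B₀ := by
    constructor
    · rintro u w ⟨e, v, rfl, rfl, hve, -⟩
      exact ⟨hsupp_single e, hsupp_star v,
        singleton_ssubset_estar G hcubic ((mem_estar G).2 hve)⟩
    · rintro u w₁ w₂ ⟨e₁, v₁, rfl, rfl, hv₁, hv₁C⟩ ⟨e₂, v₂, he, rfl, hv₂, hv₂C⟩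
      have he' : e₁ = e₂ := Finset.singleton_injective he
      subst he'
      have : v₁ = v₂ := by
        by_contra hne
        have hE : (e₁ : Sym2 V) = s(v₁, v₂) := (Sym2.mem_and_mem_iff hne).1 ⟨hv₁, hv₂⟩
        obtain ⟨w, hwC, hwE⟩ := hC (e₁ : Sym2 V) e₁.2
        rw [hE, Sym2.mem_iff] at hwE
        rcases hwE with rfl | rfl
        · exact hv₁C hwC
        · exact hv₂C hwC
      rw [this]
  have hub : zetaM M ≤ G.edgeFinset.card + τ := by
    have hsub : IrredVerts M B₀ ⊆
        ↑((Finset.univ.image (fun e : ↥G.edgeFinset => ({e} : Finset ↥G.edgeFinset))) ∪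
          C.image (estar G)) := by
      rintro w ⟨hws, r, hrw, hr⟩
      rcases (hsupp' w).1 hws with ⟨e, rfl⟩ | ⟨v, rfl⟩
      · simp
      · rcases Classical.em (v ∈ C) with hv | hv
        · exact Finset.mem_coe.2 (Finset.mem_union_right _ (Finset.mem_image_of_mem _ hv))
        · exfalso
          exact hr {r} ⟨r, v, rfl, rfl, (mem_estar G).1 hrw, hv⟩ (Finset.mem_singleton_self r)
    have h1 : (IrredVerts M B₀).ncard ≤ G.edgeFinset.card + τ := by
      refine le_trans (le_trans (Set.ncard_le_ncard hsub (Finset.finite_toSet _))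
        (by rw [Set.ncard_coe_finset])) ?_
      refine le_trans (Finset.card_union_le _ _) ?_
      have h2 : (Finset.univ.image (fun e : ↥G.edgeFinset => ({e} : Finset ↥G.edgeFinset))).card
          = G.edgeFinset.card := by
        rw [Finset.card_image_of_injective _ Finset.singleton_injective, Finset.card_univ,
          Fintype.card_coe]
      have h3 : (C.image (estar G)).card ≤ τ := by
        rw [Finset.card_image_of_injective _ (estar_inj G hcubic), hCcard]
      omega
    exact le_trans (Nat.sInf_le ⟨B₀, hbr₀, rfl⟩) h1
  have hlb : ∀ k, (∃ B, IsBranching M B ∧ (IrredVerts M B).ncard = k) →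
      G.edgeFinset.card + τ ≤ k := by
    rintro k ⟨B, hB, rfl⟩
    set Sfin : Finset V := Finset.univ.filter (fun v => estar G v ∉ IrredVerts M B) with hSfin
    have hkey : ∀ v ∈ Sfin, ∀ e ∈ estar G v, B {e} (estar G v) := by
      intro v hv e he
      have hnI : estar G v ∉ IrredVerts M B := (Finset.mem_filter.1 hv).2
      have hne : ¬ ∃ r ∈ estar G v, ∀ u, B u (estar G v) → r ∉ u := fun h => hnI ⟨hsupp_star v, h⟩
      push_neg at hne
      obtain ⟨u, hu, heu⟩ := hne e he
      obtain ⟨hus, -, hss⟩ := hB.1 _ _ hu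
      rcases (hsupp' u).1 hus with ⟨e', rfl⟩ | ⟨v', rfl⟩
      · rw [Finset.mem_singleton.1 heu]
        exact hu
      · exfalso
        have := Finset.card_lt_card hss
        rw [estar_card G hcubic, estar_card G hcubic] at this
        omega
    have hcov : ∀ e ∈ G.edgeFinset, ∃ v ∈ Finset.univ \ Sfin, v ∈ e := by
      intro e he
      induction e using Sym2.ind with
      | _ a b =>
        rcases Classical.em (a ∈ Sfin) with ha | ha
        · rcases Classical.em (b ∈ Sfin) with hb | hb
          · exfalso
            have hadj : G.Adj a b := (SimpleGraph.mem_edgeFinset.1 he)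
            have hne : a ≠ b := hadj.ne
            have hea : (⟨s(a, b), he⟩ : ↥G.edgeFinset) ∈ estar G a :=
              (mem_estar G).2 (Sym2.mem_mk_left a b)
            have heb : (⟨s(a, b), he⟩ : ↥G.edgeFinset) ∈ estar G b :=
              (mem_estar G).2 (Sym2.mem_mk_right a b)
            have h1 := hkey a ha _ hea
            have h2 := hkey b hb _ heb
            have := hB.2 _ _ _ h1 h2
            exact hne (estar_inj G hcubic this)
          · exact ⟨b, Finset.mem_sdiff.2 ⟨Finset.mem_univ _, hb⟩, Sym2.mem_mk_right a b⟩
        · exact ⟨a, Finset.mem_sdiff.2 ⟨Finset.mem_univ _, ha⟩, Sym2.mem_mk_left a b⟩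
    have hτle : τ ≤ (Finset.univ \ Sfin).card := Nat.sInf_le ⟨_, hcov, rfl⟩
    set F : Finset (Finset ↥G.edgeFinset) :=
      (Finset.univ.image (fun e : ↥G.edgeFinset => ({e} : Finset ↥G.edgeFinset))) ∪
        (Finset.univ \ Sfin).image (estar G) with hF
    have hFsub : ↑F ⊆ IrredVerts M B := by
      intro w hw
      rw [Finset.mem_coe, hF, Finset.mem_union] at hw
      rcases hw with hw | hw
      · obtain ⟨e, -, rfl⟩ := Finset.mem_image.1 hw
        refine ⟨hsupp_single e, e, Finset.mem_singleton_self e, ?_⟩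
        intro u hu he'
        obtain ⟨hus, -, hss⟩ := hB.1 _ _ hu
        have hu0 : u = ∅ := by
          rcases Finset.eq_empty_or_nonempty u with h | h
          · exact h
          · exfalso
            obtain ⟨x, hx⟩ := h
            have hx' := hss.1 hx
            rw [Finset.mem_singleton] at hx'
            subst hx'
            exact hss.2 (Finset.singleton_subset_iff.2 hx)
        rw [hu0] at hus
        exact hempty hus
      · obtain ⟨v, hv, rfl⟩ := Finset.mem_image.1 hw
        have hv' : v ∉ Sfin := (Finset.mem_sdiff.1 hv).2
        by_contra h
        exact hv' (Finset.mem_filter.2 ⟨Finset.mem_univ _, h⟩)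
    have hFcard : G.edgeFinset.card + (Finset.univ \ Sfin).card ≤ F.card := by
      rw [hF, Finset.card_union_of_disjoint, Finset.card_image_of_injective _
        Finset.singleton_injective, Finset.card_image_of_injective _ (estar_inj G hcubic),
        Finset.card_univ, Fintype.card_coe]
      rw [Finset.disjoint_left]
      rintro w hw hw'
      obtain ⟨e, -, rfl⟩ := Finset.mem_image.1 hw
      obtain ⟨v, -, hv⟩ := Finset.mem_image.1 hw'
      have := estar_card G hcubic v
      rw [hv, Finset.card_singleton] at this
      omega
    calc G.edgeFinset.card + τ ≤ G.edgeFinset.card + (Finset.univ \ Sfin).card := by omega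
      _ ≤ F.card := hFcard
      _ = (↑F : Set (Finset ↥G.edgeFinset)).ncard := (Set.ncard_coe_finset F).symm
      _ ≤ (IrredVerts M B).ncard := Set.ncard_le_ncard hFsub (Set.toFinite _)
  refine le_antisymm hub ?_
  have hZne : {k | ∃ B, IsBranching M B ∧ (IrredVerts M B).ncard = k}.Nonempty :=
    ⟨_, B₀, hbr₀, rfl⟩
  exact hlb _ (Nat.sInf_mem hZne)
end
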